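/- arXiv:0705.1698 — 6 statements merged into one kernel-verified Lean document; each statement's English description precedes it below -/
import Mathlib

section
/- Let γ, δ ⊆ {1,…,n} be subsets with |γ| = |δ|. Then the following are equivalent: (1) the vector χ_γ − χ_δ ∈ ℤⁿ is a linear combination with nonnegative integer coefficients of the vectors e_a − e_b with 1 ≤ a < b ≤ n (i.e. of the positive roots of GL_n); (2) there exists a bijection f : γ∖δ → δ∖γ such that a < f(a) for every a ∈ γ∖δ. -/
/-!
Every positive root `e_a - e_b` (`a < b`) has nonnegative sum over each prefix `{x | x ≤ k}`,
so under (1) so does `χ_γ - χ_δ`: after cancelling `γ ∩ δ`, the prefix counts of `γ \ δ`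
dominate those of `δ \ γ`. That domination forces the `i`-th smallest element of `γ \ δ`
to lie below the `i`-th smallest element of `δ \ γ`, so matching them in increasing order gives
`f`. Conversely, `χ_γ - χ_δ = ∑_{a ∈ γ \ δ} (e_a - e_{f a})`.
-/

open Finset

namespace Finset

section DecidableEq

variable {α : Type*} [DecidableEq α]

theorem ite_mem_sdiff_sub_ite_mem_sdiff {R : Type*} [AddGroupWithOne R] (s t : Finset α) (x : α) :
    ((if x ∈ s \ t then 1 else 0) - (if x ∈ t \ s then 1 else 0) : R) =
      (if x ∈ s then 1 else 0) - (if x ∈ t then 1 else 0) := by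
  by_cases hs : x ∈ s <;> by_cases ht : x ∈ t <;> simp [hs, ht]

theorem card_filter_sdiff_le_card_filter_sdiff_iff (s t : Finset α) (p : α → Prop)
    [DecidablePred p] :
    #{x ∈ s \ t | p x} ≤ #{x ∈ t \ s | p x} ↔ #{x ∈ s | p x} ≤ #{x ∈ t | p x} := by
  have filter_sdiff : ∀ u v : Finset α, {x ∈ u \ v | p x} = {x ∈ u | p x} \ {x ∈ v | p x} := by
    intro u v
    ext
    simp only [mem_filter, mem_sdiff]
    tauto
  rw [filter_sdiff, filter_sdiff, card_sdiff_le_card_sdiff_iff]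

end DecidableEq

section LinearOrder

variable {α : Type*} [LinearOrder α]

theorem card_filter_eq_card_filter_orderEmbOfFin (s : Finset α) {k : ℕ} (h : #s = k)
    (p : α → Prop) [DecidablePred p] :
    #{x ∈ s | p x} = #{i | p (s.orderEmbOfFin h i)} := by
  calc #{x ∈ s | p x} = #{x ∈ univ.map (s.orderEmbOfFin h).toEmbedding | p x} := by
        rw [map_orderEmbOfFin_univ]
    _ = _ := by rw [filter_map, card_map]; rfl

theorem card_filter_lt_orderEmbOfFin (s : Finset α) {k : ℕ} (h : #s = k) (i : Fin k) :
    #{x ∈ s | x < s.orderEmbOfFin h i} = i := by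
  simp [card_filter_eq_card_filter_orderEmbOfFin s h, filter_gt_eq_Iio]

theorem card_filter_le_orderEmbOfFin (s : Finset α) {k : ℕ} (h : #s = k) (i : Fin k) :
    #{x ∈ s | x ≤ s.orderEmbOfFin h i} = i + 1 := by
  simp [card_filter_eq_card_filter_orderEmbOfFin s h, filter_ge_eq_Iic]

theorem orderEmbOfFin_le_orderEmbOfFin_of_card_filter_le {s t : Finset α} {k : ℕ}
    (hs : #s = k) (ht : #t = k) (hst : ∀ a, #{x ∈ t | x ≤ a} ≤ #{x ∈ s | x ≤ a}) (i : Fin k) :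
    s.orderEmbOfFin hs i ≤ t.orderEmbOfFin ht i := by
  by_contra! hlt
  have hsub : {x ∈ s | x ≤ t.orderEmbOfFin ht i} ⊆ {x ∈ s | x < s.orderEmbOfFin hs i} :=
    monotone_filter_right s fun _ _ hx => hx.trans_lt hlt
  have := (hst (t.orderEmbOfFin ht i)).trans (card_le_card hsub)
  rw [card_filter_le_orderEmbOfFin, card_filter_lt_orderEmbOfFin] at this
  omega

theorem exists_bijOn_lt_of_card_filter_le {s t : Finset α} (hdisj : Disjoint s t)
    (hcard : #s = #t) (hst : ∀ a, #{x ∈ t | x ≤ a} ≤ #{x ∈ s | x ≤ a}) :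
    ∃ f : α → α, Set.BijOn f s t ∧ ∀ a ∈ s, a < f a := by
  set φ := s.orderEmbOfFin rfl
  set ψ := t.orderEmbOfFin hcard.symm
  have hf : ∀ i, Function.extend φ ψ id (φ i) = ψ i := φ.injective.extend_apply ψ id
  refine ⟨Function.extend φ ψ id, ?_, ?_⟩
  · rw [← image_eq_iff_bijOn_of_card hcard.le]
    calc s.image (Function.extend φ ψ id) = (univ.image φ).image (Function.extend φ ψ id) := by
          rw [image_orderEmbOfFin_univ]
      _ = t := by simp only [image_image, Function.comp_def, hf, ψ, image_orderEmbOfFin_univ]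
  · intro a ha
    obtain ⟨i, rfl⟩ : a ∈ Set.range φ := by simpa [φ] using ha
    rw [hf]
    exact (orderEmbOfFin_le_orderEmbOfFin_of_card_filter_le rfl hcard.symm hst i).lt_of_ne
      (disjoint_iff_ne.mp hdisj _ (orderEmbOfFin_mem _ _ _) _ (orderEmbOfFin_mem _ _ _))

end LinearOrder

end Finset

section PositiveRoots

variable {α : Type*} [Fintype α] [LinearOrder α]

def positiveRootCombination (c : α → α → ℕ) (x : α) : ℤ :=
  ∑ a, ∑ b, if a < b then (c a b : ℤ) * ((if x = a then 1 else 0) - (if x = b then 1 else 0))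
    else 0

theorem sum_filter_le_positiveRootCombination_nonneg (c : α → α → ℕ) (k : α) :
    0 ≤ ∑ x with x ≤ k, positiveRootCombination c x := by
  unfold positiveRootCombination
  rw [sum_comm]
  refine sum_nonneg fun a _ => ?_
  rw [sum_comm]
  refine sum_nonneg fun b _ => ?_
  split_ifs with hab
  · rw [← mul_sum, sum_sub_distrib, sum_ite_eq', sum_ite_eq']
    have : b ≤ k → a ≤ k := hab.le.trans
    refine mul_nonneg (Int.natCast_nonneg _) ?_
    simp only [mem_filter, mem_univ, true_and]
    split_ifs <;> simp_all
  · simp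

theorem card_filter_le_le_of_forall_eq_positiveRootCombination {γ δ : Finset α}
    {c : α → α → ℕ}
    (hc : ∀ x, (if x ∈ γ then 1 else 0) - (if x ∈ δ then 1 else 0) = positiveRootCombination c x)
    (k : α) : #{x ∈ δ | x ≤ k} ≤ #{x ∈ γ | x ≤ k} := by
  have hsum : ∑ x with x ≤ k, positiveRootCombination c x =
      (#{x ∈ γ | x ≤ k} : ℤ) - #{x ∈ δ | x ≤ k} := by
    simp only [← hc, sum_sub_distrib, sum_boole, filter_filter, and_comm (a := _ ≤ k)]
    simp only [← filter_filter, filter_mem_eq_inter, univ_inter]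
  have := sum_filter_le_positiveRootCombination_nonneg c k
  omega

theorem positiveRootCombination_of_bijOn {s t : Finset α} {f : α → α} (hf : Set.BijOn f s t)
    (hlt : ∀ a ∈ s, a < f a) (x : α) :
    positiveRootCombination (fun a b => if a ∈ s ∧ f a = b then 1 else 0) x =
      (if x ∈ s then 1 else 0) - (if x ∈ t then 1 else 0) := by
  have hrow : ∀ a, (∑ b, if a < b then ((if a ∈ s ∧ f a = b then 1 else 0 : ℕ) : ℤ) *
      ((if x = a then 1 else 0) - (if x = b then 1 else 0)) else 0) =
      if a ∈ s then (if x = a then 1 else 0) - (if x = f a then 1 else 0) else 0 := by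
    intro a
    by_cases ha : a ∈ s
    · rw [if_pos ha, sum_eq_single (f a)]
      · simp [ha, hlt a ha]
      · intro b _ hb
        simp [Ne.symm hb]
      · simp
    · simp [ha]
  calc positiveRootCombination (fun a b => if a ∈ s ∧ f a = b then 1 else 0) x
      = ∑ a ∈ s, ((if x = a then 1 else 0) - (if x = f a then 1 else 0)) := by
        simp only [positiveRootCombination, hrow, sum_ite_mem, univ_inter]
    _ = ∑ a ∈ s, (if x = a then 1 else 0) - ∑ b ∈ t, (if x = b then 1 else 0) := by
        rw [sum_sub_distrib, sum_nbij (g := fun b => if x = b then 1 else 0) f hf.mapsTo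
          hf.injOn hf.surjOn fun _ _ => rfl]
    _ = _ := by rw [sum_ite_eq, sum_ite_eq]

end PositiveRoots

/-- Let `γ, δ ⊆ {1,…,n}` (encoded as `Finset (Fin n)`) with `|γ| = |δ|`.  The following are
equivalent:
(1) the vector `χ_γ − χ_δ ∈ ℤⁿ` is a linear combination with nonnegative integer coefficients
    of the vectors `e_a − e_b` with `a < b` (the positive roots of `GL_n`);
(2) there is a bijection `f : γ∖δ → δ∖γ` with `a < f a` for every `a ∈ γ∖δ`. -/
theorem indicator_difference_sum_of_positive_roots_iff
    (n : ℕ) (γ δ : Finset (Fin n)) (hcard : γ.card = δ.card) :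
    (∃ c : Fin n → Fin n → ℕ, ∀ x : Fin n,
        ((if x ∈ γ then (1 : ℤ) else 0) - (if x ∈ δ then (1 : ℤ) else 0)) =
          ∑ a : Fin n, ∑ b : Fin n,
            if a < b then
              (c a b : ℤ) * ((if x = a then (1 : ℤ) else 0) - (if x = b then (1 : ℤ) else 0))
            else 0) ↔
    (∃ f : Fin n → Fin n,
        Set.BijOn f ↑(γ \ δ) ↑(δ \ γ) ∧ ∀ a ∈ γ \ δ, a < f a) := by
  constructor
  · rintro ⟨c, hc⟩
    refine exists_bijOn_lt_of_card_filter_le disjoint_sdiff_sdiff (card_sdiff_comm hcard)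
      fun k => ?_
    exact (card_filter_sdiff_le_card_filter_sdiff_iff δ γ _).2
      (card_filter_le_le_of_forall_eq_positiveRootCombination hc k)
  · rintro ⟨f, hf, hlt⟩
    refine ⟨fun a b => if a ∈ γ \ δ ∧ f a = b then 1 else 0, fun x => ?_⟩
    rw [← ite_mem_sdiff_sub_ite_mem_sdiff γ δ x]
    exact (positiveRootCombination_of_bijOn hf hlt x).symm
end

section
/- Let M be a function from subsets of {1,…,n} to ℤ with M(∅) = 0 satisfying the edge inequalities: M(S∪{a}) + M(S∪{b}) ≤ M(S) + M(S∪{a,b}) for every subset S and all distinct a, b not in S. Let ν ∈ ℤⁿ and define F : Δ_n → ℤ by F(i,j,k) = M({k+1,…,k+i}) + ν_{k+i+1} + … + ν_n. Then F satisfies the first family of min-convention rhombus inequalities: F(i,j,k) + F(i,j+1,k−1) ≤ F(i+1,j,k−1) + F(i−1,j+1,k) whenever all four points lie in Δ_n. -/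
/-- The interval `{k+1, …, k+i} ⊆ {1,…,n}` in 1-based notation, encoded as the set of
0-based indices `a` with `k ≤ a < k + i` in `Fin n` (empty if `i = 0`). -/
def intervalFinset (n k i : ℕ) : Finset (Fin n) :=
  Finset.univ.filter fun a => k ≤ a.val ∧ a.val < k + i

/-- The tail sum `ν_{m+1} + … + ν_n` (1-based), i.e. the sum of `ν a` over 0-based
indices `a ≥ m`. -/
def tailSum (n : ℕ) (ν : Fin n → ℤ) (m : ℕ) : ℤ :=
  ∑ a ∈ Finset.univ.filter (fun a : Fin n => m ≤ a.val), ν a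

/-- If `M` (with `M ∅ = 0`) satisfies the edge inequalities, `ν ∈ ℤⁿ`, and
`F(i,j,k) = M({k+1,…,k+i}) + ν_{k+i+1} + … + ν_n` on `Δ_n`, then `F` satisfies the first
family of min-convention rhombus inequalities
`F(i,j,k) + F(i,j+1,k−1) ≤ F(i+1,j,k−1) + F(i−1,j+1,k)` (indices shifted below so that all
four points visibly lie in `Δ_n`). -/
theorem first_rhombus_family_of_edge_inequalities
    (n : ℕ) (M : Finset (Fin n) → ℤ) (hM0 : M ∅ = 0)
    (hedge : ∀ (S : Finset (Fin n)) (a b : Fin n), a ≠ b → a ∉ S → b ∉ S →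
      M (insert a S) + M (insert b S) ≤ M S + M (insert a (insert b S)))
    (ν : Fin n → ℤ) (F : ℕ → ℕ → ℕ → ℤ)
    (hF : ∀ i j k : ℕ, i + j + k = n →
      F i j k = M (intervalFinset n k i) + tailSum n ν (k + i)) :
    ∀ i j k : ℕ, i + j + k + 2 = n →
      F (i + 1) j (k + 1) + F (i + 1) (j + 1) k ≤
        F (i + 2) j k + F i (j + 1) (k + 1) := by
  intro i j k hn
  rw [hF (i+1) j (k+1) (by omega), hF (i+1) (j+1) k (by omega),
      hF (i+2) j k (by omega), hF i (j+1) (k+1) (by omega)]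
  have haa : k + i + 1 < n := by omega
  have hbb : k < n := by omega
  set a : Fin n := ⟨k+i+1, haa⟩ with ha_def
  set b : Fin n := ⟨k, hbb⟩ with hb_def
  set S := intervalFinset n (k+1) i with hS_def
  have h1 : intervalFinset n (k+1) (i+1) = insert a S := by
    ext x
    simp only [intervalFinset, hS_def, Finset.mem_insert, Finset.mem_filter,
      Finset.mem_univ, true_and, Fin.ext_iff, ha_def]
    omega
  have h2 : intervalFinset n k (i+1) = insert b S := by
    ext x
    simp only [intervalFinset, hS_def, Finset.mem_insert, Finset.mem_filter,
      Finset.mem_univ, true_and, Fin.ext_iff, hb_def]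
    omega
  have h3 : intervalFinset n k (i+2) = insert a (insert b S) := by
    ext x
    simp only [intervalFinset, hS_def, Finset.mem_insert, Finset.mem_filter,
      Finset.mem_univ, true_and, Fin.ext_iff, ha_def, hb_def]
    omega
  have hne : a ≠ b := by
    simp only [ha_def, hb_def, ne_eq, Fin.ext_iff]; omega
  have haS : a ∉ S := by
    simp only [hS_def, intervalFinset, Finset.mem_filter, Finset.mem_univ, true_and,
      ha_def]
    omega
  have hbS : b ∉ S := by
    simp only [hS_def, intervalFinset, Finset.mem_filter, Finset.mem_univ, true_and,
      hb_def]
    omega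
  have key := hedge S a b hne haS hbS
  rw [h1, h2, h3]
  have e1 : k + 1 + (i + 1) = k + (i + 2) := by ring
  have e2 : k + (i + 1) = k + 1 + i := by ring
  rw [e1, e2]
  linarith
end

section
/- Let M be a GL_n BZ datum, set m = M({1,…,n}), and let ν ∈ ℤⁿ. Define M' on subsets of {1,…,n} by M'(S) = M({1,…,n}∖S) + Σ_{a∈S} ν_a − m. Then M' is a GL_n BZ datum with M'({1,…,n}) = (ν_1+…+ν_n) − m, and its polytope satisfies P(M') = ν − P(M) := {ν − x : x ∈ P(M)}. -/
/-- A `GL_n` BZ datum: a function from subsets of `{1,…,n}` (encoded as `Finset (Fin n)`)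
to `ℤ` with `M ∅ = 0`, satisfying the tropical Plücker relations and the edge inequalities. -/
def IsBZDatum (n : ℕ) (M : Finset (Fin n) → ℤ) : Prop :=
  M ∅ = 0 ∧
  (∀ (S : Finset (Fin n)) (a b c : Fin n), a < b → b < c → a ∉ S → b ∉ S → c ∉ S →
    M (insert a (insert c S)) + M (insert b S) =
      min (M (insert a (insert b S)) + M (insert c S))
        (M (insert a S) + M (insert b (insert c S)))) ∧
  (∀ (S : Finset (Fin n)) (a b : Fin n), a ≠ b → a ∉ S → b ∉ S →
    M (insert a S) + M (insert b S) ≤ M S + M (insert a (insert b S)))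

/-- The polytope `P(M) = {α ∈ ℝⁿ : Σ_{a∈S} α_a ≥ M(S)` for all nonempty proper `S`, and
`Σ_a α_a = M({1,…,n})}`. -/
def BZPolytope (n : ℕ) (M : Finset (Fin n) → ℤ) : Set (Fin n → ℝ) :=
  {α | (∀ S : Finset (Fin n), S.Nonempty → S ≠ Finset.univ → (M S : ℝ) ≤ ∑ a ∈ S, α a) ∧
    ∑ a, α a = (M Finset.univ : ℝ)}

/-- `conv(W·λ)`: the convex hull in `ℝⁿ` of all coordinate permutations of `λ ∈ ℤⁿ`. -/
noncomputable def permHull (n : ℕ) (lam : Fin n → ℤ) : Set (Fin n → ℝ) :=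
  convexHull ℝ {x : Fin n → ℝ | ∃ σ : Equiv.Perm (Fin n), ∀ a, x a = (lam (σ a) : ℝ)}

/-- If `M` is a BZ datum with `m = M({1,…,n})` and `ν ∈ ℤⁿ`, then
`M'(S) = M({1,…,n}∖S) + Σ_{a∈S} ν_a − m` is again a BZ datum, with
`M'({1,…,n}) = (ν_1+…+ν_n) − m` and `P(M') = ν − P(M)`. -/
theorem dual_BZ_datum
    (n : ℕ) (M : Finset (Fin n) → ℤ) (hBZ : IsBZDatum n M) (ν : Fin n → ℤ)
    (M' : Finset (Fin n) → ℤ)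
    (hM' : ∀ S : Finset (Fin n), M' S = M Sᶜ + (∑ a ∈ S, ν a) - M Finset.univ) :
    IsBZDatum n M' ∧
    M' Finset.univ = (∑ a, ν a) - M Finset.univ ∧
    BZPolytope n M' = (fun x => (fun a => (ν a : ℝ)) - x) '' BZPolytope n M := by
  obtain ⟨hM0, hMP, hME⟩ := hBZ
  have hMuniv : M' Finset.univ = (∑ a, ν a) - M Finset.univ := by
    rw [hM' Finset.univ, Finset.compl_univ, hM0]; ring
  refine ⟨⟨?_, ?_, ?_⟩, hMuniv, ?_⟩
  · rw [hM' ∅]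
    simp [Finset.compl_empty]
  · -- tropical Plücker relations
    intro S a b c hab hbc ha hb hc
    have hab' : a ≠ b := hab.ne
    have hbc' : b ≠ c := hbc.ne
    have hac' : a ≠ c := (hab.trans hbc).ne
    set T := Sᶜ \ {a, b, c} with hT
    have haT : a ∉ T := by simp [hT]
    have hbT : b ∉ T := by simp [hT]
    have hcT : c ∉ T := by simp [hT]
    have key := hMP T a b c hab hbc haT hbT hcT
    have e1 : (insert a (insert c S))ᶜ = insert b T := by
      ext x
      by_cases hx : x = b <;>
        simp [hT, hx, hab'.symm, hbc', hb, eq_comm (a := x)] <;> tauto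
    have e2 : (insert b S)ᶜ = insert a (insert c T) := by
      ext x
      by_cases hx : x = a
      · simp [hT, hx, hab', hac', ha, eq_comm (a := x)]
      by_cases hx' : x = c <;>
        simp [hT, hx, hx', hac'.symm, hbc'.symm, hc, eq_comm (a := x)] <;> tauto
    have e3 : (insert a (insert b S))ᶜ = insert c T := by
      ext x
      by_cases hx : x = c <;>
        simp [hT, hx, hac'.symm, hbc'.symm, hc, eq_comm (a := x)] <;> tauto
    have e4 : (insert c S)ᶜ = insert a (insert b T) := by
      ext x
      by_cases hx : x = a
      · simp [hT, hx, hab', hac', ha, eq_comm (a := x)]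
      by_cases hx' : x = b <;>
        simp [hT, hx, hx', hab'.symm, hbc', hb, eq_comm (a := x)] <;> tauto
    have e5 : (insert a S)ᶜ = insert b (insert c T) := by
      ext x
      by_cases hx : x = b
      · simp [hT, hx, hab'.symm, hbc', hb, eq_comm (a := x)]
      by_cases hx' : x = c <;>
        simp [hT, hx, hx', hac'.symm, hbc'.symm, hc, eq_comm (a := x)] <;> tauto
    have e6 : (insert b (insert c S))ᶜ = insert a T := by
      ext x
      by_cases hx : x = a <;>
        simp [hT, hx, hab', hac', ha, eq_comm (a := x)] <;> tauto
    have hacS : a ∉ insert c S := by simp [ha, hac']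
    have habS : a ∉ insert b S := by simp [ha, hab']
    have hbcS : b ∉ insert c S := by simp [hb, hbc']
    have hν1 : ∑ y ∈ insert a (insert c S), ν y + ∑ y ∈ insert b S, ν y =
        ∑ y ∈ insert a (insert b S), ν y + ∑ y ∈ insert c S, ν y := by
      rw [Finset.sum_insert hacS, Finset.sum_insert habS, Finset.sum_insert hb,
        Finset.sum_insert hc]
      ring
    have hν2 : ∑ y ∈ insert a (insert c S), ν y + ∑ y ∈ insert b S, ν y =
        ∑ y ∈ insert a S, ν y + ∑ y ∈ insert b (insert c S), ν y := by
      rw [Finset.sum_insert hacS, Finset.sum_insert hbcS, Finset.sum_insert hc,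
        Finset.sum_insert hb, Finset.sum_insert ha]
      ring
    rw [hM' (insert a (insert c S)), hM' (insert b S), hM' (insert a (insert b S)),
      hM' (insert c S), hM' (insert a S), hM' (insert b (insert c S)),
      e1, e2, e3, e4, e5, e6]
    omega
  · -- edge inequalities
    intro S a b hab ha hb
    set T := Sᶜ \ {a, b} with hT
    have haT : a ∉ T := by simp [hT]
    have hbT : b ∉ T := by simp [hT]
    have key := hME T a b hab haT hbT
    have e1 : (insert a S)ᶜ = insert b T := by
      ext x
      by_cases hx : x = b <;>
        simp [hT, hx, hab.symm, hb, eq_comm (a := x)] <;> tauto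
    have e2 : (insert b S)ᶜ = insert a T := by
      ext x
      by_cases hx : x = a <;>
        simp [hT, hx, hab, ha, eq_comm (a := x)] <;> tauto
    have e3 : (insert a (insert b S))ᶜ = T := by
      ext x
      simp [hT, eq_comm (a := x)]
      tauto
    have e4 : Sᶜ = insert a (insert b T) := by
      ext x
      by_cases hx : x = a
      · simp [hT, hx, ha, eq_comm (a := x)]
      by_cases hx' : x = b <;>
        simp [hT, hx, hx', hb, eq_comm (a := x)] <;> tauto
    have habS : a ∉ insert b S := by simp [ha, hab]
    have hν : ∑ y ∈ insert a S, ν y + ∑ y ∈ insert b S, ν y =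
        ∑ y ∈ S, ν y + ∑ y ∈ insert a (insert b S), ν y := by
      rw [Finset.sum_insert habS, Finset.sum_insert hb, Finset.sum_insert ha]
      ring
    rw [hM' (insert a S), hM' (insert b S), hM' S, hM' (insert a (insert b S)),
      e1, e2, e3, e4]
    omega
  · -- polytope equality
    ext x
    constructor
    · rintro ⟨hineq, hsum⟩
      refine ⟨(fun a => (ν a : ℝ)) - x, ⟨?_, ?_⟩, ?_⟩
      · intro S hS hSu
        have hcne : Sᶜ.Nonempty := by
          rw [Finset.nonempty_iff_ne_empty, ne_eq, Finset.compl_eq_empty_iff]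
          exact hSu
        have hcnu : Sᶜ ≠ Finset.univ := (Finset.compl_ne_univ_iff_nonempty S).mpr hS
        have h1 := hineq Sᶜ hcne hcnu
        rw [hM' Sᶜ, compl_compl] at h1
        have h2 : ∑ a ∈ Sᶜ, x a + ∑ a ∈ S, x a = ∑ a, x a :=
          Finset.sum_compl_add_sum S x
        have h3 : (∑ a ∈ Sᶜ, ν a) + ∑ a ∈ S, ν a = ∑ a, ν a :=
          Finset.sum_compl_add_sum S ν
        rw [hsum, hMuniv] at h2
        have h3' : ((∑ a ∈ Sᶜ, ν a : ℤ) : ℝ) + ((∑ a ∈ S, ν a : ℤ) : ℝ)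
            = ((∑ a, ν a : ℤ) : ℝ) := by exact_mod_cast h3
        simp only [Pi.sub_apply, Finset.sum_sub_distrib]
        push_cast at h1 h2 h3' ⊢
        linarith
      · have h2 : ∑ a, ((fun a => (ν a : ℝ)) - x) a = (∑ a, (ν a : ℝ)) - ∑ a, x a := by
          simp [Finset.sum_sub_distrib]
        rw [h2, hsum, hMuniv]
        push_cast
        ring
      · funext a; simp
    · rintro ⟨y, ⟨hineq, hsum⟩, rfl⟩
      constructor
      · intro S hS hSu
        have hcne : Sᶜ.Nonempty := by
          rw [Finset.nonempty_iff_ne_empty, ne_eq, Finset.compl_eq_empty_iff]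
          exact hSu
        have hcnu : Sᶜ ≠ Finset.univ := (Finset.compl_ne_univ_iff_nonempty S).mpr hS
        have h1 := hineq Sᶜ hcne hcnu
        have h2 : ∑ a ∈ Sᶜ, y a + ∑ a ∈ S, y a = ∑ a, y a :=
          Finset.sum_compl_add_sum S y
        rw [hsum] at h2
        rw [hM' S]
        simp only [Pi.sub_apply, Finset.sum_sub_distrib]
        push_cast at h1 h2 ⊢
        linarith
      · have h2 : ∑ a, ((fun a => (ν a : ℝ)) - y) a = (∑ a, (ν a : ℝ)) - ∑ a, y a := by
          simp [Finset.sum_sub_distrib]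
        rw [h2, hsum, hMuniv]
        push_cast
        ring
end

section
/- Let λ, μ, ν ∈ ℤⁿ be dominant and let M ∈ MV_{λμ}^ν. Then for all integers i, j, k ≥ 0 with i + j + k = n, the minimum of M(α) + Σ_{b∈β} ν_b over all pairs of disjoint subsets α, β ⊆ {1,…,n} with |α| = i and |β| = j is equal to M({k+1,…,k+i}) + ν_{k+i+1} + … + ν_n; i.e. the minimum is attained at α = {k+1,…,k+i}, β = {k+i+1,…,n}. -/
/-- Membership in `MV_{λμ}^ν`: `M` is a BZ datum with
`M({k+1,…,n}) = λ_{k+1}+…+λ_n` for `0 ≤ k ≤ n−1`,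
`M({1,…,i}) = (ν_1−μ_1)+…+(ν_i−μ_i)` for `1 ≤ i ≤ n−1`,
`P(M) ⊆ conv(W·λ)`, and `P(M) ⊆ ν − conv(W·μ)`. -/
def IsMVDatum (n : ℕ) (lam mu nu : Fin n → ℤ) (M : Finset (Fin n) → ℤ) : Prop :=
  IsBZDatum n M ∧
  (∀ k : ℕ, k < n →
    M (Finset.univ.filter fun a : Fin n => k ≤ a.val) =
      ∑ a ∈ Finset.univ.filter (fun a : Fin n => k ≤ a.val), lam a) ∧
  (∀ i : ℕ, 1 ≤ i → i < n →
    M (Finset.univ.filter fun a : Fin n => a.val < i) =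
      ∑ a ∈ Finset.univ.filter (fun a : Fin n => a.val < i), (nu a - mu a)) ∧
  BZPolytope n M ⊆ permHull n lam ∧
  BZPolytope n M ⊆ (fun x => (fun a => (nu a : ℝ)) - x) '' permHull n mu

/-- `F : Δ_n → ℤ` is a hive (min convention): whenever all points appearing lie in `Δ_n`,
(i)   `F(i,j,k) + F(i,j+1,k−1) ≤ F(i+1,j,k−1) + F(i−1,j+1,k)`;
(ii)  `F(i,j,k) + F(i+1,j−1,k) ≤ F(i+1,j,k−1) + F(i,j−1,k+1)`;
(iii) `F(i,j,k) + F(i+1,j,k−1) ≤ F(i,j+1,k−1) + F(i+1,j−1,k)`.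
The indices below are shifted so that no natural subtraction appears. -/
def IsHive (n : ℕ) (F : ℕ → ℕ → ℕ → ℤ) : Prop :=
  (∀ i j k : ℕ, i + j + k + 2 = n →
    F (i + 1) j (k + 1) + F (i + 1) (j + 1) k ≤ F (i + 2) j k + F i (j + 1) (k + 1)) ∧
  (∀ i j k : ℕ, i + j + k + 2 = n →
    F i (j + 1) (k + 1) + F (i + 1) j (k + 1) ≤ F (i + 1) (j + 1) k + F i j (k + 2)) ∧
  (∀ i j k : ℕ, i + j + k + 2 = n →
    F i (j + 1) (k + 1) + F (i + 1) (j + 1) k ≤ F i (j + 2) k + F (i + 1) j (k + 1))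

/-- `F` has boundary `(λ, μ, ν)`: in 1-based notation,
`λ_k = F(n−k+1,0,k−1) − F(n−k,0,k)`, `μ_i = F(i−1,n−i+1,0) − F(i,n−i,0)`, and
`ν_k = F(0,n−k+1,k−1) − F(0,n−k,k)` (written below with 0-based indices `Fin n`). -/
def HasBoundary (n : ℕ) (F : ℕ → ℕ → ℕ → ℤ) (lam mu nu : Fin n → ℤ) : Prop :=
  (∀ k : Fin n, F (n - k.val) 0 k.val - F (n - k.val - 1) 0 (k.val + 1) = lam k) ∧
  (∀ i : Fin n, F i.val (n - i.val) 0 - F (i.val + 1) (n - i.val - 1) 0 = mu i) ∧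
  (∀ k : Fin n, F 0 (n - k.val) k.val - F 0 (n - k.val - 1) (k.val + 1) = nu k)

open Finset

/-!
Write `D_S(a, b) = M(S ∪ {b}) - M(S ∪ {a})` for `a < b` outside `S`. The tropical Plücker
relations make `D_S(a, b)` grow when elements above `b` are added to `S` and when elements below
`a` are removed from it, and `D` is additive along `a < c < b`; so it suffices to bound `D` for
adjacent `a, b` and extreme `S`. There the boundary values of `M`, together with
`M(T) ≥ (sum of the |T| smallest λ's)` and `M(T) ≥ ν(T) - (sum of the |T| largest μ's)`
(read off a greedy vertex of `P(M)` lying in `conv(W·λ)` and in `ν - conv(W·μ)`), give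
`M(S ∪ {b}) ≤ M(S ∪ {a})` and `M(S ∪ {a}) + ν_b ≤ M(S ∪ {b}) + ν_a`.

Hence moving an element of `α` or of `β` to a larger free index, or swapping `a ∈ α` with a
smaller `b ∈ β`, never increases `M(α) + Σ_β ν`. A pair admitting none of these moves has `β` and
`α ∪ β` upward closed, so it is the interval pair.
-/

theorem Finset.sum_le_sum_of_card_eq_of_forall_sdiff_le {ι β : Type*} [DecidableEq ι]
    [AddCommMonoid β] [LinearOrder β] [IsOrderedAddMonoid β] {f : ι → β} {s t : Finset ι}
    (hcard : #s = #t) (h : ∀ i ∈ s \ t, ∀ j ∈ t \ s, f i ≤ f j) :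
    ∑ i ∈ s, f i ≤ ∑ i ∈ t, f i := by
  rw [← sum_inter_add_sum_sdiff s t f, ← sum_inter_add_sum_sdiff t s f, inter_comm]
  refine add_le_add_right ?_ _
  rcases (t \ s).eq_empty_or_nonempty with hts | hts
  · have hst : s \ t = ∅ := card_eq_zero.mp (by rw [card_sdiff_comm hcard, hts, card_empty])
    simp [hst, hts]
  · obtain ⟨j₀, hj₀, hmin⟩ := exists_min_image (t \ s) f hts
    calc ∑ i ∈ s \ t, f i ≤ #(s \ t) • f j₀ := sum_le_card_nsmul _ _ _ fun i hi => h i hi j₀ hj₀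
      _ = #(t \ s) • f j₀ := by rw [card_sdiff_comm hcard]
      _ ≤ ∑ j ∈ t \ s, f j := card_nsmul_le_sum _ _ _ hmin

theorem Finset.card_insert_erase_of_mem {α : Type*} [DecidableEq α] {s : Finset α} {a c : α}
    (ha : a ∈ s) (hc : c ∉ s) : #(insert c (s.erase a)) = #s := by
  rw [card_insert_of_notMem fun h => hc (mem_of_mem_erase h), card_erase_add_one ha]

theorem Finset.sum_insert_erase_add {α β : Type*} [DecidableEq α] [AddCommMonoid β]
    {s : Finset α} {a c : α} (ha : a ∈ s) (hc : c ∉ s) (f : α → β) :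
    ∑ x ∈ insert c (s.erase a), f x + f a = ∑ x ∈ s, f x + f c := by
  rw [sum_insert fun h => hc (mem_of_mem_erase h), add_assoc, sum_erase_add _ _ ha, add_comm]

theorem Fin.card_filter_le_val (n m : ℕ) : #(univ.filter fun a : Fin n => m ≤ a.val) = n - m := by
  have h := card_filter_add_card_filter_not (s := (univ : Finset (Fin n))) (fun a => a.val < m)
  simp only [not_lt, card_univ, Fintype.card_fin, Fin.card_filter_val_lt] at h
  omega

theorem Fin.eq_filter_of_isUpperSet {n : ℕ} {S : Finset (Fin n)}
    (hS : IsUpperSet (S : Set (Fin n))) : S = univ.filter fun a : Fin n => n - #S ≤ a.val := by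
  rcases S.eq_empty_or_nonempty with rfl | hne
  · ext a
    simp [a.isLt]
  · obtain ⟨m, rfl⟩ : ∃ m, S = Ici m := ⟨S.min' hne, by
      ext x
      exact ⟨fun hx => mem_Ici.2 (S.min'_le x hx),
        fun hx => hS (mem_Ici.1 hx) (S.min'_mem hne)⟩⟩
    ext x
    simp only [Fin.card_Ici, mem_Ici, mem_filter, mem_univ, true_and, Fin.le_def]
    have := m.isLt
    omega

theorem Fin.val_eq_succ_of_covBy {n : ℕ} {a b : Fin n} (h : a ⋖ b) : b.val = a.val + 1 := by
  simpa [Nat.covBy_iff_add_one_eq, eq_comm] using Fin.covBy_iff.1 h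

theorem sub_le_sub_of_forall_covBy {ι β : Type*} [LinearOrder ι] [LocallyFiniteOrder ι]
    [DecidableEq ι] [AddCommGroup β] [PartialOrder β] [IsOrderedAddMonoid β]
    {M : Finset ι → β} {g : ι → β}
    (hcov : ∀ S a b, a ∉ S → b ∉ S → a ⋖ b → M (insert b S) - M (insert a S) ≤ g b - g a)
    {S : Finset ι} {a b : ι} (ha : a ∉ S) (hb : b ∉ S) (hab : a < b) :
    M (insert b S) - M (insert a S) ≤ g b - g a := by
  induction hN : #(Ioo a b) using Nat.strong_induction_on generalizing S a b with
  | _ N ih =>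
  by_cases hcv : a ⋖ b
  · exact hcov S a b ha hb hcv
  obtain ⟨c, hac, hcb⟩ : ∃ c, a < c ∧ c < b := by
    by_contra! h
    exact hcv ⟨hab, fun c h₁ h₂ => (h c h₁).not_gt h₂⟩
  have hc : c ∈ Ioo a b := mem_Ioo.2 ⟨hac, hcb⟩
  have hlt₁ : #(Ioo a c) < N := hN ▸ card_lt_card
    ⟨Ioo_subset_Ioo_right hcb.le, fun h => by simpa using h hc⟩
  have hlt₂ : #(Ioo c b) < N := hN ▸ card_lt_card
    ⟨Ioo_subset_Ioo_left hac.le, fun h => by simpa using h hc⟩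
  by_cases hcS : c ∈ S
  · -- `S = T ∪ {c}`, and the difference splits through `T ∪ {a, b}`
    set T := S.erase c
    have haT : a ∉ T := fun h => ha (mem_of_mem_erase h)
    have hbT : b ∉ T := fun h => hb (mem_of_mem_erase h)
    have hcT : c ∉ T := notMem_erase c S
    have h₁ := ih _ hlt₁ (S := insert b T) (by simp [haT, hab.ne]) (by simp [hcT, hcb.ne]) hac rfl
    have h₂ := ih _ hlt₂ (S := insert a T) (by simp [hcT, hac.ne']) (by simp [hbT, hab.ne']) hcb rfl
    rw [← insert_erase hcS]
    calc M (insert b (insert c T)) - M (insert a (insert c T))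
        = (M (insert c (insert b T)) - M (insert a (insert b T)))
          + (M (insert b (insert a T)) - M (insert c (insert a T))) := by
          rw [insert_comm b c, insert_comm a c, insert_comm a b]; abel
      _ ≤ (g c - g a) + (g b - g c) := add_le_add h₁ h₂
      _ = g b - g a := by abel
  · calc M (insert b S) - M (insert a S)
        = (M (insert c S) - M (insert a S)) + (M (insert b S) - M (insert c S)) := by abel
      _ ≤ (g c - g a) + (g b - g c) :=
          add_le_add (ih _ hlt₁ ha hcS hac rfl) (ih _ hlt₂ hcS hb hcb rfl)
      _ = g b - g a := by abel

theorem supermodular_of_edge {α : Type*} [DecidableEq α] {M : Finset α → ℤ}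
    (hedge : ∀ (S : Finset α) (a b : α), a ≠ b → a ∉ S → b ∉ S →
      M (insert a S) + M (insert b S) ≤ M S + M (insert a (insert b S)))
    {A B : Finset α} {c : α} (hAB : A ⊆ B) (hc : c ∉ B) :
    M (insert c A) + M B ≤ M A + M (insert c B) := by
  suffices key : ∀ U : Finset α, c ∉ A ∪ U →
      M (insert c A) + M (A ∪ U) ≤ M A + M (insert c (A ∪ U)) by
    simpa [union_eq_right.2 hAB] using key B (by rwa [union_eq_right.2 hAB])
  intro U
  induction U using Finset.induction_on with
  | empty => intro _; simp [add_comm]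
  | insert d U _ ih =>
    intro hc
    rw [union_insert] at hc ⊢
    by_cases hd : d ∈ A ∪ U
    · rw [insert_eq_of_mem hd] at hc ⊢
      exact ih hc
    · have hcd : c ≠ d := fun h => hc (h ▸ mem_insert_self c _)
      have hcU : c ∉ A ∪ U := fun h => hc (mem_insert_of_mem h)
      have := hedge (A ∪ U) c d hcd hcU hd
      have := ih hcU
      linarith

section Greedy

variable {α : Type*} [Fintype α]

def rankBelow (r : α → ℕ) (m : ℕ) : Finset α := univ.filter fun b => r b < m

/-- Edmonds' greedy vector of `M` along the chain of initial segments of the ranking `r`. -/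
def greedyVector (M : Finset α → ℤ) (r : α → ℕ) (a : α) : ℤ :=
  M (rankBelow r (r a + 1)) - M (rankBelow r (r a))

theorem notMem_rankBelow_self {r : α → ℕ} (a : α) : a ∉ rankBelow r (r a) := by
  simp [rankBelow]

variable [DecidableEq α] {M : Finset α → ℤ} {r : α → ℕ}

theorem rankBelow_succ (hr : Function.Injective r) (m : ℕ) :
    rankBelow r (m + 1) = rankBelow r m ∨
      ∃ a, r a = m ∧ rankBelow r (m + 1) = insert a (rankBelow r m) := by
  by_cases h : ∃ a, r a = m
  · obtain ⟨a, rfl⟩ := h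
    refine Or.inr ⟨a, rfl, ?_⟩
    ext b
    simp only [rankBelow, mem_filter, mem_univ, true_and, mem_insert]
    constructor
    · intro hb
      rcases Nat.lt_succ_iff_lt_or_eq.1 hb with hb | hb
      · exact Or.inr hb
      · exact Or.inl (hr hb)
    · rintro (rfl | hb) <;> omega
  · push Not at h
    refine Or.inl (filter_congr fun b _ => ?_)
    have := h b
    omega

theorem sum_greedyVector_rankBelow (hM0 : M ∅ = 0) (hr : Function.Injective r) (m : ℕ) :
    ∑ a ∈ rankBelow r m, greedyVector M r a = M (rankBelow r m) := by
  induction m with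
  | zero => simp [rankBelow, hM0]
  | succ m ih =>
    rcases rankBelow_succ hr m with h | ⟨a, rfl, h⟩
    · rw [h, ih]
    · rw [h, sum_insert (notMem_rankBelow_self a), ih, greedyVector, ← h]
      ring

theorem le_sum_greedyVector
    (hM0 : M ∅ = 0) (hsup : ∀ {A B : Finset α} {c : α}, A ⊆ B → c ∉ B →
      M (insert c A) + M B ≤ M A + M (insert c B))
    (hr : Function.Injective r) (S : Finset α) :
    M S ≤ ∑ a ∈ S, greedyVector M r a := by
  suffices ∀ m, M (S ∩ rankBelow r m) ≤ ∑ a ∈ S ∩ rankBelow r m, greedyVector M r a by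
    have hm : rankBelow r (univ.sup r + 1) = univ :=
      filter_true_of_mem fun b _ => Nat.lt_succ_of_le (le_sup (mem_univ b))
    simpa [hm] using this (univ.sup r + 1)
  intro m
  induction m with
  | zero => simp [rankBelow, hM0]
  | succ m ih =>
    rcases rankBelow_succ hr m with h | ⟨a, rfl, h⟩
    · rwa [h]
    · by_cases haS : a ∈ S
      · have ha : a ∉ S ∩ rankBelow r (r a) := fun h => notMem_rankBelow_self a (mem_inter.1 h).2
        rw [h, inter_insert_of_mem haS, sum_insert ha, greedyVector, h]
        have := hsup inter_subset_right (notMem_rankBelow_self a) (A := S ∩ rankBelow r (r a))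
        linarith
      · rwa [h, inter_insert_of_notMem haS]

theorem exists_le_sum_and_sum_eq (hM0 : M ∅ = 0)
    (hsup : ∀ {A B : Finset α} {c : α}, A ⊆ B → c ∉ B →
      M (insert c A) + M B ≤ M A + M (insert c B)) (T : Finset α) :
    ∃ x : α → ℤ, (∀ S, M S ≤ ∑ a ∈ S, x a) ∧ ∑ a ∈ T, x a = M T ∧ ∑ a, x a = M univ := by
  -- rank `T` first, so that `T` and `univ` are both initial segments
  let e := Fintype.equivFin α
  let r : α → ℕ := fun a => if a ∈ T then e a else Fintype.card α + e a
  have hr : Function.Injective r := by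
    intro a b h
    have ha := (e a).isLt
    have hb := (e b).isLt
    simp only [r] at h
    split_ifs at h <;> first | omega | exact e.injective (Fin.ext (by omega))
  have hT : rankBelow r (Fintype.card α) = T := by
    ext a
    have := (e a).isLt
    by_cases ha : a ∈ T <;> simp [rankBelow, r, ha, this]
  have huniv : rankBelow r (2 * Fintype.card α) = univ := by
    refine filter_true_of_mem fun a _ => ?_
    have := (e a).isLt
    simp only [r]
    split_ifs <;> omega
  refine ⟨greedyVector M r, le_sum_greedyVector hM0 hsup hr, ?_, ?_⟩
  · rw [← hT, sum_greedyVector_rankBelow hM0 hr]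
  · rw [← huniv, sum_greedyVector_rankBelow hM0 hr, huniv]

end Greedy

section Hull

variable {n : ℕ}

theorem permHull_subset {lam : Fin n → ℤ} {s : Set (Fin n → ℝ)} (hs : Convex ℝ s)
    (h : ∀ σ : Equiv.Perm (Fin n), (fun a => (lam (σ a) : ℝ)) ∈ s) : permHull n lam ⊆ s :=
  convexHull_min (by rintro x ⟨σ, hx⟩; rw [funext hx]; exact h σ) hs

theorem isLinearMap_sum_apply (T : Finset (Fin n)) :
    IsLinearMap ℝ fun x : Fin n → ℝ => ∑ a ∈ T, x a :=
  ⟨fun _ _ => sum_add_distrib, fun c x => by simp [mul_sum]⟩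

theorem sum_cast_comp_perm_eq_sum_map (lam : Fin n → ℤ) (σ : Equiv.Perm (Fin n)) (T : Finset (Fin n)) :
    ∑ a ∈ T, (lam (σ a) : ℝ) = ((∑ u ∈ T.map σ.toEmbedding, lam u : ℤ) : ℝ) := by
  push_cast
  rw [sum_map]
  rfl

theorem sum_filter_le_sum_of_mem_permHull {lam : Fin n → ℤ} (hlam : Antitone lam)
    (T : Finset (Fin n)) {x : Fin n → ℝ} (hx : x ∈ permHull n lam) :
    ((∑ a ∈ univ.filter (fun a : Fin n => n - #T ≤ a.val), lam a : ℤ) : ℝ) ≤ ∑ a ∈ T, x a := by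
  refine permHull_subset (convex_halfSpace_ge (isLinearMap_sum_apply T) _) (fun σ => ?_) hx
  simp only [Set.mem_ofPred_eq, sum_cast_comp_perm_eq_sum_map]
  have hT : #T ≤ n := card_le_univ T |>.trans_eq (Fintype.card_fin n)
  refine Int.cast_le.2 (sum_le_sum_of_card_eq_of_forall_sdiff_le ?_ fun i hi j hj => ?_)
  · rw [Fin.card_filter_le_val, card_map]
    omega
  · simp only [mem_sdiff, mem_filter, mem_univ, true_and] at hi hj
    exact hlam (Fin.le_def.2 (by omega))

theorem sum_le_sum_filter_of_mem_permHull {mu : Fin n → ℤ} (hmu : Antitone mu)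
    (T : Finset (Fin n)) {y : Fin n → ℝ} (hy : y ∈ permHull n mu) :
    ∑ a ∈ T, y a ≤ ((∑ a ∈ univ.filter (fun a : Fin n => a.val < #T), mu a : ℤ) : ℝ) := by
  refine permHull_subset (convex_halfSpace_le (isLinearMap_sum_apply T) _) (fun σ => ?_) hy
  simp only [Set.mem_ofPred_eq, sum_cast_comp_perm_eq_sum_map]
  have hT : #T ≤ n := card_le_univ T |>.trans_eq (Fintype.card_fin n)
  refine Int.cast_le.2 (sum_le_sum_of_card_eq_of_forall_sdiff_le ?_ fun i hi j hj => ?_)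
  · rw [card_map, Fin.card_filter_val_lt]
    omega
  · simp only [mem_sdiff, mem_filter, mem_univ, true_and] at hi hj
    exact hmu (Fin.le_def.2 (by omega))

end Hull

namespace IsBZDatum

variable {n : ℕ} {M : Finset (Fin n) → ℤ}

theorem sub_le_sub_insert_of_lt (hM : IsBZDatum n M) {S : Finset (Fin n)} {a b d : Fin n}
    (hab : a < b) (hbd : b < d) (ha : a ∉ S) (hb : b ∉ S) (hd : d ∉ S) :
    M (insert b S) - M (insert a S) ≤ M (insert b (insert d S)) - M (insert a (insert d S)) := by
  have := hM.2.1 S a b d hab hbd ha hb hd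
  have := min_le_right (M (insert a (insert b S)) + M (insert d S))
    (M (insert a S) + M (insert b (insert d S)))
  linarith

theorem sub_insert_le_sub_of_lt (hM : IsBZDatum n M) {S : Finset (Fin n)} {c a b : Fin n}
    (hca : c < a) (hab : a < b) (hc : c ∉ S) (ha : a ∉ S) (hb : b ∉ S) :
    M (insert b (insert c S)) - M (insert a (insert c S)) ≤ M (insert b S) - M (insert a S) := by
  have := hM.2.1 S c a b hca hab hc ha hb
  have := min_le_left (M (insert c (insert a S)) + M (insert b S))
    (M (insert c S) + M (insert a (insert b S)))
  rw [insert_comm b c, insert_comm a c]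
  linarith

theorem sub_le_sub_union_of_lt (hM : IsBZDatum n M) {S U : Finset (Fin n)} {a b : Fin n}
    (hab : a < b) (ha : a ∉ S) (hb : b ∉ S) (hU : ∀ u ∈ U, b < u) :
    M (insert b S) - M (insert a S) ≤ M (insert b (U ∪ S)) - M (insert a (U ∪ S)) := by
  induction U using Finset.induction_on with
  | empty => simp
  | insert u U _ ih =>
    have hU' : ∀ x ∈ U, b < x := fun x hx => hU x (mem_insert_of_mem hx)
    refine (ih hU').trans ?_
    rw [insert_union]
    by_cases hu : u ∈ U ∪ S
    · rw [insert_eq_of_mem hu]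
    · have haU : a ∉ U ∪ S := fun h =>
        (mem_union.1 h).elim (fun h => lt_asymm hab (hU' a h)) ha
      have hbU : b ∉ U ∪ S := fun h =>
        (mem_union.1 h).elim (fun h => lt_irrefl b (hU' b h)) hb
      exact hM.sub_le_sub_insert_of_lt hab (hU u (mem_insert_self u U)) haU hbU hu

theorem sub_union_le_sub_of_lt (hM : IsBZDatum n M) {S L : Finset (Fin n)} {a b : Fin n}
    (hab : a < b) (ha : a ∉ S) (hb : b ∉ S) (hL : ∀ l ∈ L, l < a) :
    M (insert b (L ∪ S)) - M (insert a (L ∪ S)) ≤ M (insert b S) - M (insert a S) := by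
  induction L using Finset.induction_on with
  | empty => simp
  | insert l L _ ih =>
    have hL' : ∀ x ∈ L, x < a := fun x hx => hL x (mem_insert_of_mem hx)
    refine le_trans ?_ (ih hL')
    rw [insert_union]
    by_cases hl : l ∈ L ∪ S
    · rw [insert_eq_of_mem hl]
    · have haL : a ∉ L ∪ S := fun h =>
        (mem_union.1 h).elim (fun h => lt_irrefl a (hL' a h)) ha
      have hbL : b ∉ L ∪ S := fun h =>
        (mem_union.1 h).elim (fun h => lt_asymm hab (hL' b h)) hb
      exact hM.sub_insert_le_sub_of_lt (hL l (mem_insert_self l L)) hab hl haL hbL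

theorem exists_mem_bzPolytope (hM : IsBZDatum n M) (T : Finset (Fin n)) :
    ∃ x : Fin n → ℤ, (fun a => (x a : ℝ)) ∈ BZPolytope n M ∧ ∑ a ∈ T, x a = M T := by
  obtain ⟨x, hle, hT, huniv⟩ :=
    exists_le_sum_and_sum_eq hM.1 (supermodular_of_edge hM.2.2) T
  refine ⟨x, ⟨fun S _ _ => ?_, ?_⟩, hT⟩
  · beta_reduce
    exact_mod_cast hle S
  · beta_reduce
    exact_mod_cast huniv

end IsBZDatum

namespace IsMVDatum

variable {n : ℕ} {lam mu nu : Fin n → ℤ} {M : Finset (Fin n) → ℤ}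

theorem sum_filter_lam_le (hMV : IsMVDatum n lam mu nu M) (hlam : Antitone lam)
    (T : Finset (Fin n)) :
    ∑ a ∈ univ.filter (fun a : Fin n => n - #T ≤ a.val), lam a ≤ M T := by
  obtain ⟨x, hx, hT⟩ := hMV.1.exists_mem_bzPolytope T
  have := sum_filter_le_sum_of_mem_permHull hlam T (hMV.2.2.2.1 hx)
  rw [← hT]
  exact_mod_cast this

theorem sum_nu_sub_sum_filter_mu_le (hMV : IsMVDatum n lam mu nu M) (hmu : Antitone mu)
    (T : Finset (Fin n)) :
    ∑ a ∈ T, nu a - ∑ a ∈ univ.filter (fun a : Fin n => a.val < #T), mu a ≤ M T := by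
  obtain ⟨x, hx, hT⟩ := hMV.1.exists_mem_bzPolytope T
  obtain ⟨y, hy, hyx⟩ := hMV.2.2.2.2 hx
  have hxy : ∀ a, (x a : ℝ) = nu a - y a := fun a => (congrFun hyx a).symm
  have := sum_le_sum_filter_of_mem_permHull hmu T hy
  have hsum : ((M T : ℤ) : ℝ) = ∑ a ∈ T, (nu a : ℝ) - ∑ a ∈ T, y a := by
    rw [← hT, ← sum_sub_distrib]
    push_cast
    exact sum_congr rfl fun a _ => hxy a
  have : ((∑ a ∈ T, nu a - ∑ a ∈ univ.filter (fun a : Fin n => a.val < #T), mu a : ℤ) : ℝ)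
      ≤ M T := by
    push_cast at this ⊢
    linarith
  exact_mod_cast this

theorem sub_insert_nonpos_of_covBy (hMV : IsMVDatum n lam mu nu M) (hlam : Antitone lam)
    {S : Finset (Fin n)} {a b : Fin n} (ha : a ∉ S) (hb : b ∉ S) (hab : a ⋖ b) :
    M (insert b S) - M (insert a S) ≤ 0 := by
  -- `S` may be traded for `Ioi b`: there `M (Ici b)` is a boundary value and the `λ`-bound
  -- applies to `M (insert a (Ioi b))`
  have hS : Ioi b ∪ S = S.filter (· < a) ∪ Ioi b := by
    ext x
    have := hab.le_of_lt (c := x)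
    simp only [mem_union, mem_Ioi, mem_filter]
    grind
  have hUp := hMV.1.sub_le_sub_union_of_lt hab.lt ha hb (U := Ioi b) fun u hu => mem_Ioi.1 hu
  have hDown := hMV.1.sub_union_le_sub_of_lt hab.lt (S := Ioi b) (L := S.filter (· < a))
    (by simpa using hab.lt.le) (by simp) fun l hl => (mem_filter.1 hl).2
  have hIci : insert b (Ioi b) = univ.filter fun x : Fin n => b.val ≤ x.val := by
    rw [Ioi_insert]
    ext x
    simp only [mem_Ici, mem_filter, mem_univ, true_and, Fin.le_def]
  have hcard : #(insert a (Ioi b)) = n - b.val := by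
    rw [card_insert_of_notMem (by simpa using hab.lt.le), Fin.card_Ioi]
    have := b.isLt
    omega
  have hbound := hMV.sum_filter_lam_le hlam (insert a (Ioi b))
  rw [hcard, show n - (n - b.val) = b.val by have := b.isLt; omega] at hbound
  have htail := hMV.2.1 b.val b.isLt
  rw [hIci] at hDown
  rw [hS] at hUp
  linarith

theorem nu_sub_le_sub_insert_of_covBy (hMV : IsMVDatum n lam mu nu M) (hmu : Antitone mu)
    {S : Finset (Fin n)} {a b : Fin n} (ha : a ∉ S) (hb : b ∉ S) (hab : a ⋖ b) :
    nu b - nu a ≤ M (insert b S) - M (insert a S) := by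
  -- `S` may be traded for `Iio a`: there `M (Iic a)` is a boundary value and the `μ`-bound
  -- applies to `M (insert b (Iio a))`
  have hba := Fin.val_eq_succ_of_covBy hab
  have hS : Iio a ∪ S = S.filter (b < ·) ∪ Iio a := by
    ext x
    have := hab.le_of_lt (c := x)
    simp only [mem_union, mem_Iio, mem_filter]
    grind
  have hUp := hMV.1.sub_le_sub_union_of_lt hab.lt (S := Iio a) (U := S.filter (b < ·))
    (by simp) (by simpa using hab.lt.le) fun u hu => (mem_filter.1 hu).2
  have hDown := hMV.1.sub_union_le_sub_of_lt hab.lt ha hb (L := Iio a) fun l hl => mem_Iio.1 hl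
  have hIic : insert a (Iio a) = univ.filter fun x : Fin n => x.val < b.val := by
    rw [Iio_insert]
    ext x
    simp only [mem_Iic, mem_filter, mem_univ, true_and, Fin.le_def]
    omega
  have hcard : #(insert b (Iio a)) = b.val := by
    rw [card_insert_of_notMem (by simpa using hab.lt.le), Fin.card_Iio]
    omega
  have hbound := hMV.sum_nu_sub_sum_filter_mu_le hmu (insert b (Iio a))
  rw [hcard, sum_insert (by simpa using hab.lt.le)] at hbound
  have hhead := hMV.2.2.1 b.val (by omega) b.isLt
  have hnu : ∑ x ∈ univ.filter (fun x : Fin n => x.val < b.val), nu x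
      = nu a + ∑ x ∈ Iio a, nu x := by
    rw [← hIic, sum_insert (by simp)]
  rw [sum_sub_distrib, hnu] at hhead
  rw [hIic] at hUp
  rw [hS] at hDown
  linarith

theorem insert_le_insert_of_lt (hMV : IsMVDatum n lam mu nu M) (hlam : Antitone lam)
    {S : Finset (Fin n)} {a b : Fin n} (ha : a ∉ S) (hb : b ∉ S) (hab : a < b) :
    M (insert b S) ≤ M (insert a S) := by
  have := sub_le_sub_of_forall_covBy (g := fun _ => (0 : ℤ))
    (fun S a b ha hb h => by simpa using hMV.sub_insert_nonpos_of_covBy hlam ha hb h) ha hb hab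
  linarith

theorem insert_add_le_insert_add_of_lt (hMV : IsMVDatum n lam mu nu M) (hmu : Antitone mu)
    {S : Finset (Fin n)} {a b : Fin n} (ha : a ∉ S) (hb : b ∉ S) (hab : a < b) :
    M (insert a S) + nu b ≤ M (insert b S) + nu a := by
  have := sub_le_sub_of_forall_covBy (M := fun S => -M S) (g := fun x => -nu x)
    (fun S a b ha hb h => by
      have := hMV.nu_sub_le_sub_insert_of_covBy hmu ha hb h
      linarith) ha hb hab
  linarith

end IsMVDatum

theorem exists_isUpperSet_pair_le_of_moves {n : ℕ} (V : Finset (Fin n) → Finset (Fin n) → ℤ)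
    (hβ : ∀ α β b c, Disjoint α β → b ∈ β → c ∉ α → c ∉ β → b < c →
      V α (insert c (β.erase b)) ≤ V α β)
    (hα : ∀ α β a c, Disjoint α β → a ∈ α → c ∉ α → c ∉ β → a < c →
      V (insert c (α.erase a)) β ≤ V α β)
    (hswap : ∀ α β a b, Disjoint α β → a ∈ α → b ∈ β → b < a →
      V (insert b (α.erase a)) (insert a (β.erase b)) ≤ V α β)
    {α β : Finset (Fin n)} (hαβ : Disjoint α β) :
    ∃ α' β', Disjoint α' β' ∧ #α' = #α ∧ #β' = #β ∧ IsUpperSet (β' : Set (Fin n)) ∧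
      IsUpperSet ((α' ∪ β' : Finset (Fin n)) : Set (Fin n)) ∧ V α' β' ≤ V α β := by
  -- every move strictly increases `ψ`, so a `ψ`-maximal pair admits no move
  let ψ : Finset (Fin n) × Finset (Fin n) → ℕ := fun p => ∑ x ∈ p.1, x.val + 2 * ∑ x ∈ p.2, x.val
  let P := (univ : Finset (Finset (Fin n) × Finset (Fin n))).filter fun p =>
    Disjoint p.1 p.2 ∧ #p.1 = #α ∧ #p.2 = #β ∧ V p.1 p.2 ≤ V α β
  obtain ⟨⟨α', β'⟩, hp, hmax⟩ := P.exists_max_image ψ ⟨(α, β), by simp [P, hαβ]⟩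
  simp only [P, mem_filter, mem_univ, true_and] at hp
  obtain ⟨hd, hcα, hcβ, hV⟩ := hp
  have hnot : ∀ α'' β'', Disjoint α'' β'' → #α'' = #α' → #β'' = #β' → V α'' β'' ≤ V α' β' →
      ¬ ψ (α', β') < ψ (α'', β'') := fun α'' β'' hd' h1 h2 hV' =>
    not_lt.2 (hmax (α'', β'') (by simp [P, hd', h1, h2, hcα, hcβ, hV'.trans hV]))
  have hupβ : IsUpperSet (β' : Set (Fin n)) := by
    intro b c hbc hb
    by_contra hc
    have hbc : b < c := lt_of_le_of_ne hbc fun h => hc (h ▸ hb)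
    have hbα : b ∉ α' := disjoint_right.1 hd hb
    by_cases hcα : c ∈ α'
    · refine hnot _ _ ?_ (card_insert_erase_of_mem hcα hbα) (card_insert_erase_of_mem hb hc)
        (hswap α' β' c b hd hcα hb hbc) ?_
      · simp only [disjoint_insert_left, disjoint_insert_right, mem_insert, mem_erase]
        exact ⟨by simp [hbc.ne'], by simp, hd.mono (erase_subset c α') (erase_subset b β')⟩
      · have h1 := sum_insert_erase_add hcα hbα Fin.val
        have h2 := sum_insert_erase_add hb hc Fin.val
        simp only [ψ]
        omega
    · refine hnot _ _ ?_ rfl (card_insert_erase_of_mem hb hc)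
        (hβ α' β' b c hd hb hcα hc hbc) ?_
      · exact disjoint_insert_right.2 ⟨hcα, hd.mono_right (erase_subset b β')⟩
      · have h2 := sum_insert_erase_add hb hc Fin.val
        simp only [ψ]
        omega
  have hupαβ : IsUpperSet ((α' ∪ β' : Finset (Fin n)) : Set (Fin n)) := by
    intro a c hac ha
    simp only [coe_union, Set.mem_union, mem_coe] at ha ⊢
    rcases ha with ha | ha
    · by_contra hc
      push Not at hc
      have hac : a < c := lt_of_le_of_ne hac fun h => hc.1 (h ▸ ha)
      refine hnot _ _ ?_ (card_insert_erase_of_mem ha hc.1) rfl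
        (hα α' β' a c hd ha hc.1 hc.2 hac) ?_
      · exact disjoint_insert_left.2 ⟨hc.2, hd.mono_left (erase_subset a α')⟩
      · have h1 := sum_insert_erase_add ha hc.1 Fin.val
        simp only [ψ]
        omega
    · exact Or.inr (hupβ hac ha)
  exact ⟨α', β', hd, hcα, hcβ, hupβ, hupαβ, hV⟩

theorem IsMVDatum.exists_isUpperSet_pair_le {n : ℕ} {lam mu nu : Fin n → ℤ}
    {M : Finset (Fin n) → ℤ} (hMV : IsMVDatum n lam mu nu M) (hlam : Antitone lam)
    (hmu : Antitone mu) (hnu : Antitone nu) {α β : Finset (Fin n)} (hαβ : Disjoint α β) :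
    ∃ α' β', Disjoint α' β' ∧ #α' = #α ∧ #β' = #β ∧ IsUpperSet (β' : Set (Fin n)) ∧
      IsUpperSet ((α' ∪ β' : Finset (Fin n)) : Set (Fin n)) ∧
      M α' + ∑ b ∈ β', nu b ≤ M α + ∑ b ∈ β, nu b := by
  refine exists_isUpperSet_pair_le_of_moves (fun α β => M α + ∑ b ∈ β, nu b) ?_ ?_ ?_ hαβ
  · intro α β b c _ hb _ hcβ hbc
    have := sum_insert_erase_add hb hcβ nu
    have := hnu hbc.le
    linarith
  · intro α β a c _ ha hcα _ hac
    have := hMV.insert_le_insert_of_lt hlam (notMem_erase a α)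
      (fun h => hcα (mem_of_mem_erase h)) hac
    rw [insert_erase ha] at this
    linarith
  · intro α β a b hd ha hb hba
    have := hMV.insert_add_le_insert_add_of_lt hmu
      (fun h => disjoint_right.1 hd hb (mem_of_mem_erase h)) (notMem_erase a α) hba
    rw [insert_erase ha] at this
    have := sum_insert_erase_add hb (disjoint_left.1 hd ha) nu
    linarith

theorem intervalFinset_eq_sdiff (n k i : ℕ) :
    intervalFinset n k i =
      univ.filter (fun a : Fin n => k ≤ a.val) \ univ.filter (fun a : Fin n => k + i ≤ a.val) := by
  ext a
  simp [intervalFinset]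

theorem min_over_disjoint_pairs_general
    (n : ℕ) (lam mu nu : Fin n → ℤ)
    (hlam : ∀ a b : Fin n, a ≤ b → lam b ≤ lam a)
    (hmu : ∀ a b : Fin n, a ≤ b → mu b ≤ mu a)
    (hnu : ∀ a b : Fin n, a ≤ b → nu b ≤ nu a)
    (M : Finset (Fin n) → ℤ) (hMV : IsMVDatum n lam mu nu M) :
    ∀ i j k : ℕ, i + j + k = n →
      (intervalFinset n k i).card = i ∧
      (Finset.univ.filter fun a : Fin n => k + i ≤ a.val).card = j ∧
      Disjoint (intervalFinset n k i)
        (Finset.univ.filter fun a : Fin n => k + i ≤ a.val) ∧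
      (∀ α β : Finset (Fin n), Disjoint α β → α.card = i → β.card = j →
        M (intervalFinset n k i) + tailSum n nu (k + i) ≤ M α + ∑ b ∈ β, nu b) := by
  intro i j k hijk
  have htail : univ.filter (fun a : Fin n => k + i ≤ a.val) ⊆ univ.filter (k ≤ ·.val) :=
    fun a ha => by simp only [mem_filter, mem_univ, true_and] at ha ⊢; omega
  refine ⟨?_, by rw [Fin.card_filter_le_val]; omega,
    intervalFinset_eq_sdiff n k i ▸ sdiff_disjoint, fun α β hαβ hα hβ => ?_⟩
  · rw [intervalFinset_eq_sdiff, card_sdiff_of_subset htail, Fin.card_filter_le_val,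
      Fin.card_filter_le_val]
    omega
  obtain ⟨α', β', hd, hcα', hcβ', hupβ, hupαβ, hle⟩ :=
    hMV.exists_isUpperSet_pair_le hlam hmu hnu hαβ
  have hβ' : β' = univ.filter (fun a : Fin n => k + i ≤ a.val) := by
    rw [Fin.eq_filter_of_isUpperSet hupβ, hcβ', hβ, show n - j = k + i by omega]
  have hαβ' : α' ∪ β' = univ.filter (fun a : Fin n => k ≤ a.val) := by
    rw [Fin.eq_filter_of_isUpperSet hupαβ, card_union_of_disjoint hd, hcα', hcβ', hα, hβ,
      show n - (i + j) = k by omega]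
  rwa [← union_sdiff_cancel_right hd, hαβ', hβ', ← intervalFinset_eq_sdiff] at hle

/-- For `M ∈ MV_{λμ}^ν` and `i + j + k = n`, the minimum of `M(α) + Σ_{b∈β} ν_b` over
pairs of disjoint subsets `α, β ⊆ {1,…,n}` with `|α| = i`, `|β| = j` equals
`M({k+1,…,k+i}) + ν_{k+i+1} + … + ν_n`; it is attained at `α = {k+1,…,k+i}`,
`β = {k+i+1,…,n}` (which form an admissible pair, as the first three conjuncts record). -/
theorem min_over_disjoint_pairs
    (n : ℕ) (hn : 1 ≤ n) (lam mu nu : Fin n → ℤ)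
    (hlam : ∀ a b : Fin n, a ≤ b → lam b ≤ lam a)
    (hmu : ∀ a b : Fin n, a ≤ b → mu b ≤ mu a)
    (hnu : ∀ a b : Fin n, a ≤ b → nu b ≤ nu a)
    (hsum : (∑ a, lam a) = (∑ a, nu a) - ∑ a, mu a)
    (M : Finset (Fin n) → ℤ) (hMV : IsMVDatum n lam mu nu M) :
    ∀ i j k : ℕ, i + j + k = n →
      (intervalFinset n k i).card = i ∧
      (Finset.univ.filter fun a : Fin n => k + i ≤ a.val).card = j ∧
      Disjoint (intervalFinset n k i)
        (Finset.univ.filter fun a : Fin n => k + i ≤ a.val) ∧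
      (∀ α β : Finset (Fin n), Disjoint α β → α.card = i → β.card = j →
        M (intervalFinset n k i) + tailSum n nu (k + i) ≤ M α + ∑ b ∈ β, nu b) :=
  min_over_disjoint_pairs_general n lam mu nu hlam hmu hnu M hMV
end

section
/- Let λ, μ, ν ∈ ℤⁿ be dominant and let M, M' ∈ MV_{λμ}^ν. If M({k+1,…,k+i}) = M'({k+1,…,k+i}) for all integers i ≥ 1 and k ≥ 0 with i + k ≤ n (i.e. M and M' agree on all intervals), then M = M' (they agree on all subsets of {1,…,n}). Equivalently, the map Φ sending M ∈ MV_{λμ}^ν to the function F(i,j,k) = M({k+1,…,k+i}) + ν_{k+i+1} + … + ν_n on Δ_n is injective. -/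
/-- A well-founded measure on subsets of `Fin n`: lexicographic in
(cardinality, `n - min`, sum of elements), packed into a single natural number. -/
private def measBZ (n : ℕ) (S : Finset (Fin n)) : ℕ :=
  S.card * ((n + 1) * (n * n + 1)) + (S.sup fun x => n - x.val) * (n * n + 1) + ∑ x ∈ S, x.val

private lemma measBZ_sum_le {n : ℕ} (S : Finset (Fin n)) : ∑ x ∈ S, x.val ≤ n * n := by
  calc ∑ x ∈ S, x.val ≤ S.card * n :=
        Finset.sum_le_card_nsmul S _ n (fun x _ => le_of_lt x.isLt)
    _ ≤ n * n := Nat.mul_le_mul_right n (le_trans (Finset.card_le_univ S) (by simp))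

private lemma measBZ_sup_le {n : ℕ} (S : Finset (Fin n)) :
    (S.sup fun x => n - x.val) ≤ n := Finset.sup_le fun x _ => Nat.sub_le _ _

private lemma measBZ_key1 {n c' c s' s e' e : ℕ}
    (hc : c' + 1 ≤ c) (hs : s' ≤ n) (he : e' ≤ n * n) :
    c' * ((n + 1) * (n * n + 1)) + s' * (n * n + 1) + e'
      < c * ((n + 1) * (n * n + 1)) + s * (n * n + 1) + e := by
  have h1 : s' * (n * n + 1) ≤ n * (n * n + 1) := Nat.mul_le_mul_right _ hs
  have h2 : (c' + 1) * ((n + 1) * (n * n + 1)) ≤ c * ((n + 1) * (n * n + 1)) :=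
    Nat.mul_le_mul_right _ hc
  nlinarith [h1, h2, he]

private lemma measBZ_key2 {n c s' s e' e : ℕ} (hs : s' + 1 ≤ s) (he : e' ≤ n * n) :
    c * ((n + 1) * (n * n + 1)) + s' * (n * n + 1) + e'
      < c * ((n + 1) * (n * n + 1)) + s * (n * n + 1) + e := by
  have h2 : (s' + 1) * (n * n + 1) ≤ s * (n * n + 1) := Nat.mul_le_mul_right _ hs
  nlinarith [h2, he]

private lemma measBZ_lt_of_card_lt {n : ℕ} {S' S : Finset (Fin n)} (h : S'.card < S.card) :
    measBZ n S' < measBZ n S :=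
  measBZ_key1 h (measBZ_sup_le S') (measBZ_sum_le S')

private lemma measBZ_lt_of_sup_lt {n : ℕ} {S' S : Finset (Fin n)} (hc : S'.card = S.card)
    (h : (S'.sup fun x => n - x.val) < S.sup fun x => n - x.val) :
    measBZ n S' < measBZ n S := by
  unfold measBZ
  rw [hc]
  exact measBZ_key2 h (measBZ_sum_le S')

private lemma measBZ_lt_of_sum_lt {n : ℕ} {S' S : Finset (Fin n)} (hc : S'.card = S.card)
    (hs : (S'.sup fun x => n - x.val) = S.sup fun x => n - x.val)
    (h : ∑ x ∈ S', x.val < ∑ x ∈ S, x.val) : measBZ n S' < measBZ n S := by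
  unfold measBZ
  rw [hc, hs]
  exact Nat.add_lt_add_left h _

private lemma measBZ_sup_eq {n : ℕ} (U : Finset (Fin n)) (x : Fin n) (hx : x ∈ U)
    (h : ∀ y ∈ U, x.val ≤ y.val) : (U.sup fun y => n - y.val) = n - x.val :=
  le_antisymm (Finset.sup_le fun y hy => Nat.sub_le_sub_left (h y hy) n)
    (Finset.le_sup (f := fun y : Fin n => n - y.val) hx)

/-- If two elements `M, M'` of `MV_{λμ}^ν` agree on all intervals `{k+1,…,k+i}`, then they
agree on all subsets of `{1,…,n}`; equivalently, the map `Φ` sending `M ∈ MV_{λμ}^ν` to the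
function `F(i,j,k) = M({k+1,…,k+i}) + ν_{k+i+1} + … + ν_n` on `Δ_n` is injective. -/
theorem MV_determined_by_intervals
    (n : ℕ) (hn : 1 ≤ n) (lam mu nu : Fin n → ℤ)
    (hlam : ∀ a b : Fin n, a ≤ b → lam b ≤ lam a)
    (hmu : ∀ a b : Fin n, a ≤ b → mu b ≤ mu a)
    (hnu : ∀ a b : Fin n, a ≤ b → nu b ≤ nu a)
    (hsum : (∑ a, lam a) = (∑ a, nu a) - ∑ a, mu a)
    (M M' : Finset (Fin n) → ℤ)
    (hMV : IsMVDatum n lam mu nu M) (hMV' : IsMVDatum n lam mu nu M')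
    (hagree : ∀ i k : ℕ, 1 ≤ i → i + k ≤ n →
      M (intervalFinset n k i) = M' (intervalFinset n k i)) :
    ∀ S : Finset (Fin n), M S = M' S := by
  obtain ⟨⟨hM0, hMP, -⟩, -, -, -, -⟩ := hMV
  obtain ⟨⟨hM0', hMP', -⟩, -, -, -, -⟩ := hMV'
  clear hlam hmu hnu hsum hn
  suffices H : ∀ (N : ℕ) (S : Finset (Fin n)), measBZ n S = N → M S = M' S from
    fun S => H _ S rfl
  intro N
  induction N using Nat.strong_induction_on with
  | _ N ih =>
  intro S hN
  subst hN
  rcases eq_or_ne S ∅ with rfl | hne0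
  · rw [hM0, hM0']
  have hne : S.Nonempty := Finset.nonempty_iff_ne_empty.mpr hne0
  by_cases hgap : ∃ x : Fin n, x ∉ S ∧ S.min' hne < x ∧ x < S.max' hne
  · -- gap case: use the tropical Plücker relation
    obtain ⟨b, hbS, hab, hbL⟩ := hgap
    set a := S.min' hne with ha_def
    set c := S.max' hne with hc_def
    have haS : a ∈ S := S.min'_mem hne
    have hcS : c ∈ S := S.max'_mem hne
    have hbc : b < c := hbL
    have hac : a < c := hab.trans hbc
    set T := (S.erase a).erase c with hT_def
    have hcT : c ∉ T := Finset.notMem_erase _ _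
    have hTsub : T ⊆ S := (Finset.erase_subset _ _).trans (Finset.erase_subset _ _)
    have haT : a ∉ T := fun h => Finset.notMem_erase a S (Finset.mem_of_mem_erase h)
    have hbT : b ∉ T := fun h => hbS (hTsub h)
    have hceA : c ∈ S.erase a := Finset.mem_erase.mpr ⟨hac.ne', hcS⟩
    have hins : insert a (insert c T) = S := by
      rw [hT_def, Finset.insert_erase hceA, Finset.insert_erase haS]
    have hminT : ∀ y ∈ T, a.val ≤ y.val := fun y hy => S.min'_le y (hTsub hy)
    -- cardinalities
    have hcard1 : (S.erase a).card + 1 = S.card := Finset.card_erase_add_one haS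
    have hcard2 : T.card + 1 = (S.erase a).card := Finset.card_erase_add_one hceA
    have haBT : a ∉ insert b T := by
      simp only [Finset.mem_insert]
      rintro (h | h)
      · exact absurd h hab.ne
      · exact haT h
    have hbCT : b ∉ insert c T := by
      simp only [Finset.mem_insert]
      rintro (h | h)
      · exact absurd h hbc.ne
      · exact hbT h
    -- measure comparisons
    have hsupS : (S.sup fun x => n - x.val) = n - a.val :=
      measBZ_sup_eq S a haS (fun y hy => S.min'_le y hy)
    have ihSb : M (insert b T) = M' (insert b T) :=
      ih _ (measBZ_lt_of_card_lt (by rw [Finset.card_insert_of_notMem hbT]; omega)) _ rfl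
    have ihSa : M (insert a T) = M' (insert a T) :=
      ih _ (measBZ_lt_of_card_lt (by rw [Finset.card_insert_of_notMem haT]; omega)) _ rfl
    have ihSc : M (insert c T) = M' (insert c T) :=
      ih _ (measBZ_lt_of_card_lt (by rw [Finset.card_insert_of_notMem hcT]; omega)) _ rfl
    have ihS1 : M (insert a (insert b T)) = M' (insert a (insert b T)) := by
      refine ih _ (measBZ_lt_of_sum_lt ?_ ?_ ?_) _ rfl
      · rw [Finset.card_insert_of_notMem haBT, Finset.card_insert_of_notMem hbT]; omega
      · rw [hsupS]
        refine measBZ_sup_eq _ a (Finset.mem_insert_self a _) ?_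
        intro y hy
        rcases Finset.mem_insert.mp hy with rfl | hy
        · exact le_refl _
        rcases Finset.mem_insert.mp hy with rfl | hy
        · exact le_of_lt hab
        · exact hminT y hy
      · have haCT : a ∉ insert c T := by
          simp only [Finset.mem_insert]
          rintro (h | h)
          · exact absurd h hac.ne
          · exact haT h
        rw [Finset.sum_insert haBT, Finset.sum_insert hbT, ← hins,
          Finset.sum_insert haCT, Finset.sum_insert hcT]
        have : b.val < c.val := hbc
        omega
    have ihS2 : M (insert b (insert c T)) = M' (insert b (insert c T)) := by
      refine ih _ (measBZ_lt_of_sup_lt ?_ ?_) _ rfl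
      · rw [Finset.card_insert_of_notMem hbCT, Finset.card_insert_of_notMem hcT]; omega
      · rw [hsupS]
        have hbd : (Finset.sup (insert b (insert c T)) fun x => n - x.val) ≤ n - (a.val + 1) := by
          refine Finset.sup_le ?_
          intro y hy
          have hy' : a.val + 1 ≤ y.val := by
            rcases Finset.mem_insert.mp hy with rfl | hy
            · exact hab
            rcases Finset.mem_insert.mp hy with rfl | hy
            · exact hac
            · have h1 := hminT y hy
              have h2 : y ≠ a := fun h => haT (h ▸ hy)
              have : a.val ≠ y.val := fun h => h2 (Fin.ext h.symm)
              omega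
          exact Nat.sub_le_sub_left hy' n
        have han : a.val < n := a.isLt
        omega
    have key := hMP T a b c hab hbc haT hbT hcT
    have key' := hMP' T a b c hab hbc haT hbT hcT
    rw [hins] at key key'
    rw [ihSb, ihSa, ihSc, ihS1, ihS2] at key
    exact add_right_cancel (key.trans key'.symm)
  · -- no gap: S is an interval, use hagree
    push_neg at hgap
    set a := S.min' hne with ha_def
    set L := S.max' hne with hL_def
    have haL : a.val ≤ L.val := S.min'_le L (S.max'_mem hne)
    have hLn : L.val < n := L.isLt
    have hSeq : S = intervalFinset n a.val (L.val + 1 - a.val) := by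
      ext x
      simp only [intervalFinset, Finset.mem_filter, Finset.mem_univ, true_and]
      constructor
      · intro hx
        have h1 : a.val ≤ x.val := S.min'_le x hx
        have h2 : x.val ≤ L.val := S.le_max' x hx
        omega
      · rintro ⟨h1, h2⟩
        by_contra hx
        have hxa : x ≠ a := fun h => hx (h ▸ S.min'_mem hne)
        have hxL : x ≠ L := fun h => hx (h ▸ S.max'_mem hne)
        have hax : a.val < x.val :=
          lt_of_le_of_ne h1 (fun h => hxa (Fin.ext h.symm))
        have hxLlt : x.val < L.val := by
          have : x.val ≤ L.val := by omega
          exact lt_of_le_of_ne this (fun h => hxL (Fin.ext h))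
        have hLx : L.val ≤ x.val := hgap x hx hax
        omega
    rw [hSeq]
    exact hagree (L.val + 1 - a.val) a.val (by omega) (by omega)
end

section
/- Let w ∈ S_n and μ ∈ ℤⁿ. For every L ∈ S_w^μ and every 1 ≤ i ≤ n, one has D_{w({1,…,i})}(L) = μ_{w(1)} + … + μ_{w(i)} = Σ_{a ∈ w({1,…,i})} μ_a. That is, the function D_{w({1,…,i})} takes the constant value ⟨μ, w·Λ_i⟩ on the semi-infinite cell S_w^μ. -/
open scoped Matrix

open Classical

noncomputable section

/-- The `(T, S)` minor (determinant of the submatrix with rows `T` and columns `S`, each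
taken in increasing order) of a matrix over the Laurent series field `K = ℂ((t))`;
junk value `0` if `|T| ≠ |S|`. -/
def laurentMinor {n : ℕ} (g : Matrix (Fin n) (Fin n) (LaurentSeries ℂ))
    (T S : Finset (Fin n)) : LaurentSeries ℂ :=
  if h : T.card = S.card then
    Matrix.det (Matrix.of fun p q : Fin S.card =>
      g (T.orderEmbOfFin h p) (S.orderEmbOfFin rfl q))
  else 0

/-- The valuation `val : ⋀^i Kⁿ → WithTop ℤ`, where an element of `⋀^i Kⁿ` is encoded by its
coordinates `u S` in the standard basis `{e_S : |S| = i}`: the minimum over `S` with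
`u S ≠ 0` of the `t`-adic valuation (`HahnSeries.order`) of `u S` (and `⊤` for `u = 0`). -/
def extVal (n i : ℕ) (u : {S : Finset (Fin n) // S.card = i} → LaurentSeries ℂ) :
    WithTop ℤ :=
  ((Finset.univ.filter fun S : {S : Finset (Fin n) // S.card = i} => u S ≠ 0).image
    fun S => (u S).order).min

/-- The action of `g ∈ Matrix (Fin n) (Fin n) K` on `⋀^i Kⁿ` in standard-basis coordinates:
`(⋀^i g)(e_S) = Σ_T det(g[T,S]) e_T`. -/
def extAct {n : ℕ} (i : ℕ) (g : Matrix (Fin n) (Fin n) (LaurentSeries ℂ))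
    (u : {S : Finset (Fin n) // S.card = i} → LaurentSeries ℂ) :
    {S : Finset (Fin n) // S.card = i} → LaurentSeries ℂ :=
  fun T => ∑ S : {S : Finset (Fin n) // S.card = i}, laurentMinor g T.val S.val * u S

/-- `h ∈ GL_n(O)` viewed inside the matrices over `K`: `h` is the entrywise image of an
invertible matrix over the power series ring `O = ℂ⟦t⟧`. -/
def InGLO (n : ℕ) (h : Matrix (Fin n) (Fin n) (LaurentSeries ℂ)) : Prop :=
  ∃ h₀ : GL (Fin n) (PowerSeries ℂ),
    (h₀ : Matrix (Fin n) (Fin n) (PowerSeries ℂ)).map (HahnSeries.ofPowerSeries ℤ ℂ) = h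

/-- `D_γ(g) = val((⋀^i g)(e_γ))` where `i = |γ|`, as a function of a matrix representative
`g` (with values in `WithTop ℤ`). -/
def Dgamma {n : ℕ} (γ : Finset (Fin n)) (g : Matrix (Fin n) (Fin n) (LaurentSeries ℂ)) :
    WithTop ℤ :=
  extVal n γ.card (extAct γ.card g fun S => if S.val = γ then 1 else 0)

/-- The diagonal matrix `t^μ = diag(t^{μ_1},…,t^{μ_n}) ∈ GL_n(K)` (as a matrix over
`K = ℂ((t))`), where `t^{μ_a}` is the Hahn series `single (μ a) 1`. -/
def tPow {n : ℕ} (μ : Fin n → ℤ) : Matrix (Fin n) (Fin n) (LaurentSeries ℂ) :=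
  Matrix.diagonal fun a => HahnSeries.single (μ a) (1 : ℂ)

/-- Membership in `N_w(K) = w N(K) w⁻¹`, where `N(K)` is the group of upper triangular
matrices over `K` with unit diagonal: `u ∈ N_w(K)` iff `u (w a) (w a) = 1` for all `a`
and `u (w a) (w b) = 0` whenever `b < a`. -/
def InNw {n : ℕ} (w : Equiv.Perm (Fin n))
    (u : Matrix (Fin n) (Fin n) (LaurentSeries ℂ)) : Prop :=
  (∀ a : Fin n, u (w a) (w a) = 1) ∧ ∀ a b : Fin n, b < a → u (w a) (w b) = 0

/-- The chamber weight `w({1,…,i})`, i.e. the image under `w` of the first `i` (0-based)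
indices. -/
def chamberSet {n : ℕ} (w : Equiv.Perm (Fin n)) (i : ℕ) : Finset (Fin n) :=
  (Finset.univ.filter fun a : Fin n => a.val < i).image w

/-!
Write `γ = w({1,…,i})` and `g = h t^μ u`. For `u ∈ N_w(K)` the columns of `u` indexed by `γ`
vanish outside the rows indexed by `γ`, and `u[γ,γ]` is unitriangular after reordering. Hence
every `γ`-column minor of `g` factors as `det h[T,γ] · t^{Σ_{a∈γ} μ_a}`. The minors of
`h ∈ GL_n(O)` lie in `O`, and since `h mod t ∈ GL_n(ℂ)` has linearly independent `γ`-columns,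
one of its `γ`-column minors is nonzero, i.e. some `det h[T,γ]` is a unit of `O`. So the minimal
valuation is exactly `Σ_{a∈γ} μ_a`.
-/

theorem Finset.sum_orderEmbOfFin {α M : Type*} [LinearOrder α] [AddCommMonoid M] (s : Finset α)
    {k : ℕ} (h : s.card = k) (f : α → M) :
    ∑ p, f (s.orderEmbOfFin h p) = ∑ a ∈ s, f a := by
  rw [← s.sum_coe_sort f]
  exact (s.orderIsoOfFin h).toEquiv.sum_comp fun a => f a

theorem exists_finset_linearIndepOn_card_eq_finrank {K V ι : Type*} [DivisionRing K]
    [AddCommGroup V] [Module K V] [FiniteDimensional K V] [Finite ι] {v : ι → V}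
    (hv : Submodule.span K (Set.range v) = ⊤) :
    ∃ T : Finset ι, T.card = Module.finrank K V ∧ LinearIndepOn K v (T : Set ι) := by
  obtain ⟨b, -, -, hspan, hli⟩ :=
    exists_linearIndepOn_extension (linearIndepOn_empty K v) (Set.empty_subset Set.univ)
  have := Fintype.ofFinite b
  refine ⟨b.toFinset, ?_, by simpa using hli⟩
  have htop : ⊤ ≤ Submodule.span K (Set.range fun x : b => v x) := by
    rw [← hv, ← Set.image_univ, ← Set.image_eq_range]
    exact Submodule.span_le.2 hspan
  rw [Module.finrank_eq_card_basis (Module.Basis.mk hli htop), Set.toFinset_card]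

namespace Matrix

theorem span_row_eq_top_of_mul_eq_one {R m n : Type*} [CommSemiring R] [Fintype m] [Fintype n]
    [DecidableEq n] {A : Matrix m n R} {B : Matrix n m R} (hBA : B * A = 1) :
    Submodule.span R (Set.range A.row) = ⊤ := by
  rw [← range_vecMulLinear, LinearMap.range_eq_top]
  exact fun y => ⟨y ᵥ* B, by rw [vecMulLinear_apply, vecMul_vecMul, hBA, vecMul_one]⟩

theorem exists_det_submatrix_orderEmbOfFin_ne_zero {K n : Type*} [Field K] [Fintype n]
    [LinearOrder n] {M : Matrix n n K} (hM : IsUnit M.det) (S : Finset n) :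
    ∃ (T : Finset n) (hT : T.card = S.card),
      (M.submatrix (T.orderEmbOfFin hT) (S.orderEmbOfFin rfl)).det ≠ 0 := by
  set c := S.orderEmbOfFin rfl
  have hleft : M⁻¹.submatrix c id * M.submatrix id c = 1 := by
    rw [← submatrix_mul _ _ _ _ _ Function.bijective_id, nonsing_inv_mul _ hM,
      submatrix_one _ c.injective]
  obtain ⟨T, hT, hli⟩ := exists_finset_linearIndepOn_card_eq_finrank (K := K)
    (span_row_eq_top_of_mul_eq_one hleft)
  rw [Module.finrank_fin_fun] at hT
  refine ⟨T, hT, ?_⟩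
  rw [← isUnit_iff_ne_zero, ← isUnit_iff_isUnit_det, ← linearIndependent_rows_iff_isUnit]
  exact hli.comp (fun p => ⟨T.orderEmbOfFin hT p, T.orderEmbOfFin_mem hT p⟩)
    fun p q hpq => (T.orderEmbOfFin hT).injective (congrArg Subtype.val hpq)

theorem det_submatrix_eq_one_of_isUpperTriangular {R n : Type*} [CommRing R] [LinearOrder n]
    {k : ℕ} {U : Matrix n n R} (hU : U.IsUpperTriangular) (hdiag : ∀ a, U a a = 1)
    {d : Fin k → n} (hd : Function.Injective d) : (U.submatrix d d).det = 1 := by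
  set σ := Tuple.sort d
  have hsorted : StrictMono (d ∘ σ) :=
    (Tuple.monotone_sort d).strictMono_of_injective (hd.comp σ.injective)
  have htri : (U.submatrix (d ∘ σ) (d ∘ σ)).IsUpperTriangular :=
    fun p q hqp => hU (hsorted hqp)
  rw [← det_submatrix_equiv_self σ, submatrix_submatrix, det_of_isUpperTriangular htri]
  exact Finset.prod_eq_one fun p _ => hdiag _

theorem submatrix_mul_orderEmbOfFin {R l m m' : Type*} [NonUnitalNonAssocSemiring R] [Fintype l]
    [LinearOrder l] (X : Matrix m l R) {N : Matrix l l R} {S : Finset l}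
    (hN : ∀ j ∉ S, ∀ x ∈ S, N j x = 0) (r : m' → m) :
    (X * N).submatrix r (S.orderEmbOfFin rfl) =
      X.submatrix r (S.orderEmbOfFin rfl) *
        N.submatrix (S.orderEmbOfFin rfl) (S.orderEmbOfFin rfl) := by
  ext p q
  have hq := S.orderEmbOfFin_mem rfl q
  simp only [submatrix_apply, mul_apply]
  rw [← Finset.sum_subset S.subset_univ fun j _ hj => by rw [hN j hj _ hq, mul_zero]]
  exact (S.sum_orderEmbOfFin rfl _).symm

end Matrix

namespace HahnSeries

theorem prod_single {Γ R ι : Type*} [AddCommMonoid Γ] [PartialOrder Γ]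
    [IsOrderedCancelAddMonoid Γ] [CommSemiring R] (s : Finset ι) (g : ι → Γ) (r : ι → R) :
    ∏ i ∈ s, single (g i) (r i) = single (∑ i ∈ s, g i) (∏ i ∈ s, r i) := by
  induction s using Finset.cons_induction with
  | empty => simp
  | cons a s ha ih => rw [Finset.prod_cons, ih, single_mul_single, Finset.sum_cons,
      Finset.prod_cons]

theorem order_ofPowerSeries_nonneg {R : Type*} [Semiring R] (x : PowerSeries R) :
    0 ≤ (ofPowerSeries ℤ R x).order := by
  rcases eq_or_ne (ofPowerSeries ℤ R x) 0 with hx | hx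
  · simp [hx]
  by_contra! hneg
  refine coeff_order_eq_zero.not.2 hx ?_
  rw [ofPowerSeries_apply]
  refine embDomain_of_notMem_range ?_
  rintro ⟨m, hm⟩
  rw [ofPowerSeries_apply, ← hm] at hneg
  exact absurd hneg (by simp)

theorem order_ofPowerSeries_eq_zero {R : Type*} [Semiring R] {x : PowerSeries R}
    (hx : PowerSeries.constantCoeff x ≠ 0) : (ofPowerSeries ℤ R x).order = 0 := by
  have hcoeff : (ofPowerSeries ℤ R x).coeff ((0 : ℕ) : ℤ) ≠ 0 := by
    rwa [ofPowerSeries_apply_coeff, PowerSeries.coeff_zero_eq_constantCoeff]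
  exact le_antisymm (order_le_of_coeff_ne_zero hcoeff) (order_ofPowerSeries_nonneg x)

end HahnSeries

section SemiInfiniteCell

variable {n : ℕ}

theorem laurentMinor_eq_det (g : Matrix (Fin n) (Fin n) (LaurentSeries ℂ))
    {T S : Finset (Fin n)} (hT : T.card = S.card) :
    laurentMinor g T S = (g.submatrix (T.orderEmbOfFin hT) (S.orderEmbOfFin rfl)).det :=
  dif_pos hT

theorem Dgamma_eq_extVal_laurentMinor (γ : Finset (Fin n))
    (g : Matrix (Fin n) (Fin n) (LaurentSeries ℂ)) :
    Dgamma γ g = extVal n γ.card fun T => laurentMinor g T.val γ := by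
  rw [Dgamma]
  congr 1
  funext T
  rw [extAct, Fintype.sum_eq_single ⟨γ, rfl⟩ fun S hS => by
    rw [if_neg fun hSγ => hS (Subtype.ext hSγ), mul_zero]]
  simp

theorem extVal_eq_of_forall_le_of_exists_eq {i : ℕ}
    {u : {S : Finset (Fin n) // S.card = i} → LaurentSeries ℂ} {d : ℤ}
    (hle : ∀ S, u S ≠ 0 → d ≤ (u S).order) (hex : ∃ S, u S ≠ 0 ∧ (u S).order = d) :
    extVal n i u = d := by
  obtain ⟨S₀, hS₀, hd⟩ := hex
  refine le_antisymm (Finset.min_le ?_) (Finset.le_min fun x hx => ?_)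
  · exact Finset.mem_image.2 ⟨S₀, Finset.mem_filter.2 ⟨Finset.mem_univ _, hS₀⟩, hd⟩
  · obtain ⟨S, hS, rfl⟩ := Finset.mem_image.1 hx
    exact WithTop.coe_le_coe.2 (hle S (Finset.mem_filter.1 hS).2)

theorem det_tPow {k : ℕ} (ν : Fin k → ℤ) :
    (tPow ν).det = HahnSeries.single (∑ a, ν a) 1 := by
  rw [tPow, Matrix.det_diagonal, HahnSeries.prod_single, Finset.prod_const_one]

theorem submatrix_tPow_mul {k : ℕ} (μ : Fin n → ℤ) (u : Matrix (Fin n) (Fin n) (LaurentSeries ℂ))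
    (c : Fin k → Fin n) : (tPow μ * u).submatrix c c = tPow (μ ∘ c) * u.submatrix c c := by
  ext p q
  simp [tPow, Matrix.diagonal_mul]

theorem mem_chamberSet {w : Equiv.Perm (Fin n)} {i : ℕ} {a : Fin n} :
    a ∈ chamberSet w i ↔ (w.symm a).val < i := by
  simp only [chamberSet, Finset.mem_image, Finset.mem_filter, Finset.mem_univ, true_and]
  exact ⟨fun ⟨b, hb, hba⟩ => hba ▸ by simpa using hb,
    fun ha => ⟨w.symm a, ha, w.apply_symm_apply a⟩⟩

namespace InNw

variable {w : Equiv.Perm (Fin n)} {u : Matrix (Fin n) (Fin n) (LaurentSeries ℂ)}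

theorem isUpperTriangular (hu : InNw w u) : (u.submatrix w w).IsUpperTriangular :=
  fun a b hba => hu.2 a b hba

theorem apply_eq_zero_of_notMem_chamberSet (hu : InNw w u) {i : ℕ} {a b : Fin n}
    (ha : a ∉ chamberSet w i) (hb : b ∈ chamberSet w i) : u a b = 0 := by
  rw [mem_chamberSet] at ha hb
  simpa using hu.2 (w.symm a) (w.symm b) (Fin.lt_def.2 (by omega))

theorem det_submatrix_eq_one (hu : InNw w u) {k : ℕ} {c : Fin k → Fin n}
    (hc : Function.Injective c) : (u.submatrix c c).det = 1 := by
  have hsub : u.submatrix c c = (u.submatrix w w).submatrix (w.symm ∘ c) (w.symm ∘ c) := by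
    ext p q
    simp
  rw [hsub]
  exact Matrix.det_submatrix_eq_one_of_isUpperTriangular hu.isUpperTriangular hu.1
    (w.symm.injective.comp hc)

theorem laurentMinor_mul_tPow_mul (hu : InNw w u) (μ : Fin n → ℤ)
    (h : Matrix (Fin n) (Fin n) (LaurentSeries ℂ)) {i : ℕ} {T : Finset (Fin n)}
    (hT : T.card = (chamberSet w i).card) :
    laurentMinor (h * tPow μ * u) T (chamberSet w i) =
      HahnSeries.single (∑ a ∈ chamberSet w i, μ a) 1 * laurentMinor h T (chamberSet w i) := by
  set c := (chamberSet w i).orderEmbOfFin rfl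
  have hcol : ∀ a ∉ chamberSet w i, ∀ b ∈ chamberSet w i, (tPow μ * u) a b = 0 :=
    fun a ha b hb => by
      rw [tPow, Matrix.diagonal_mul, hu.apply_eq_zero_of_notMem_chamberSet ha hb, mul_zero]
  rw [laurentMinor_eq_det _ hT, laurentMinor_eq_det _ hT, Matrix.mul_assoc,
    Matrix.submatrix_mul_orderEmbOfFin h hcol, Matrix.det_mul, submatrix_tPow_mul,
    Matrix.det_mul, det_tPow, hu.det_submatrix_eq_one c.injective, mul_one, mul_comm]
  simp only [Function.comp_apply, Finset.sum_orderEmbOfFin]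

end InNw

namespace InGLO

variable {h : Matrix (Fin n) (Fin n) (LaurentSeries ℂ)}

theorem laurentMinor_eq_ofPowerSeries {h₀ : GL (Fin n) (PowerSeries ℂ)}
    (hh₀ : (h₀ : Matrix (Fin n) (Fin n) (PowerSeries ℂ)).map (HahnSeries.ofPowerSeries ℤ ℂ) = h)
    {T S : Finset (Fin n)} (hT : T.card = S.card) :
    laurentMinor h T S = HahnSeries.ofPowerSeries ℤ ℂ
      ((h₀ : Matrix (Fin n) (Fin n) (PowerSeries ℂ)).submatrix
        (T.orderEmbOfFin hT) (S.orderEmbOfFin rfl)).det := by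
  rw [laurentMinor_eq_det _ hT, RingHom.map_det, ← hh₀]
  rfl

theorem order_laurentMinor_nonneg (hh : InGLO n h) (T S : Finset (Fin n)) :
    0 ≤ (laurentMinor h T S).order := by
  obtain ⟨h₀, hh₀⟩ := hh
  by_cases hT : T.card = S.card
  · rw [laurentMinor_eq_ofPowerSeries hh₀ hT]
    exact HahnSeries.order_ofPowerSeries_nonneg _
  · rw [laurentMinor, dif_neg hT, HahnSeries.order_zero]

theorem exists_order_laurentMinor_eq_zero (hh : InGLO n h) (S : Finset (Fin n)) :
    ∃ T : Finset (Fin n), T.card = S.card ∧ laurentMinor h T S ≠ 0 ∧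
      (laurentMinor h T S).order = 0 := by
  obtain ⟨h₀, hh₀⟩ := hh
  set φ := PowerSeries.constantCoeff (R := ℂ)
  have hunit : IsUnit (φ.mapMatrix (h₀ : Matrix (Fin n) (Fin n) (PowerSeries ℂ))).det := by
    rw [← RingHom.map_det]
    exact ((Matrix.isUnit_iff_isUnit_det _).1 h₀.isUnit).map φ
  obtain ⟨T, hT, hdet⟩ := Matrix.exists_det_submatrix_orderEmbOfFin_ne_zero hunit S
  have hconst : φ ((h₀ : Matrix (Fin n) (Fin n) (PowerSeries ℂ)).submatrix
      (T.orderEmbOfFin hT) (S.orderEmbOfFin rfl)).det ≠ 0 := by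
    rwa [RingHom.map_det]
  refine ⟨T, hT, ?_⟩
  rw [laurentMinor_eq_ofPowerSeries hh₀ hT]
  refine ⟨?_, HahnSeries.order_ofPowerSeries_eq_zero hconst⟩
  exact (map_ne_zero_iff _ HahnSeries.ofPowerSeries_injective).2 fun h0 =>
    hconst (by rw [h0, map_zero])

end InGLO

end SemiInfiniteCell

/-- Lemma (\cite{K1}): the function `D_{w({1,…,i})}` takes the constant value
`⟨μ, w·Λ_i⟩ = μ_{w(1)} + … + μ_{w(i)}` on the semi-infinite cell
`S_w^μ = {[t^μ u] : u ∈ N_w(K)}`; i.e. for every representative `g = h ⬝ t^μ ⬝ u` with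
`h ∈ GL_n(O)` and `u ∈ N_w(K)`, and every `1 ≤ i ≤ n`,
`D_{w({1,…,i})}(g) = Σ_{a ∈ w({1,…,i})} μ_a`. -/
theorem Dgamma_constant_on_semiinfinite_cell
    (n : ℕ) (w : Equiv.Perm (Fin n)) (μ : Fin n → ℤ)
    (g : Matrix (Fin n) (Fin n) (LaurentSeries ℂ))
    (hg : ∃ h : Matrix (Fin n) (Fin n) (LaurentSeries ℂ), InGLO n h ∧
      ∃ u : Matrix (Fin n) (Fin n) (LaurentSeries ℂ), InNw w u ∧ g = h * tPow μ * u) :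
    ∀ i : ℕ, 1 ≤ i → i ≤ n →
      Dgamma (chamberSet w i) g = ((∑ a ∈ chamberSet w i, μ a : ℤ) : WithTop ℤ) := by
  obtain ⟨h, hh, u, hu, rfl⟩ := hg
  intro i _ _
  rw [Dgamma_eq_extVal_laurentMinor]
  refine extVal_eq_of_forall_le_of_exists_eq (fun T hT => ?_) ?_
  · rw [hu.laurentMinor_mul_tPow_mul μ h T.prop] at hT ⊢
    rw [HahnSeries.order_single_mul_of_isRegular isRegular_one (right_ne_zero_of_mul hT)]
    exact le_add_of_nonneg_right (hh.order_laurentMinor_nonneg _ _)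
  · obtain ⟨T, hT, hne, hord⟩ := hh.exists_order_laurentMinor_eq_zero (chamberSet w i)
    refine ⟨⟨T, hT⟩, ?_⟩
    rw [hu.laurentMinor_mul_tPow_mul μ h hT,
      HahnSeries.order_single_mul_of_isRegular isRegular_one hne, hord, add_zero]
    exact ⟨mul_ne_zero (HahnSeries.single_ne_zero one_ne_zero) hne, rfl⟩
end
end
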